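/- arXiv:0803.0460 — 12 statements merged into one kernel-verified Lean document; each statement's English description precedes it below -/
import Mathlib

section
/- Let x₁, …, x_{2k+1} be unit vectors in a two-dimensional real normed space. Then there exist signs ε₁, …, ε_{2k+1} ∈ {±1} such that ‖∑_{i=1}^{2k+1} ε_i x_i‖ ≤ 1. -/
/-!
Flip each vector into a fixed half-plane and order the vectors by angle, so that every
vector lies in the cone spanned by any earlier and any later one; then take the alternating sum.
To bound its norm, test it against a norming functional `f`. On unit vectors `p, q, s` with
`q = α p + γ s`, `α, γ ≥ 0`, the triangle inequality gives `α + γ ≥ 1` and `|α - γ| ≤ 1`, which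
forces `f p + f s ≤ 0` whenever `f q` lies below both `f p` and `f s`. This valley condition on
the values of `f` (and of `-f`) bounds their alternating sum by `1`, by induction on the length.
-/

open Finset Complex Real ComplexConjugate

def ValleyNonpos {ι : Type*} [Preorder ι] (a : ι → ℝ) : Prop :=
  ∀ ⦃i j l⦄, i ≤ j → j ≤ l → a j < a i → a j < a l → a i + a l ≤ 0

theorem ValleyNonpos.comp_monotone {ι κ : Type*} [Preorder ι] [Preorder κ] {a : ι → ℝ}
    (ha : ValleyNonpos a) {g : κ → ι} (hg : Monotone g) : ValleyNonpos (a ∘ g) :=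
  fun _ _ _ hij hjl hji hjl' => ha (hg hij) (hg hjl) hji hjl'

theorem ValleyNonpos.alternating_sum_le_one {a : ℕ → ℝ} (ha : ValleyNonpos a)
    (hna : ValleyNonpos (-a)) (hbound : ∀ i, |a i| ≤ 1) (k : ℕ) :
    ∑ i ∈ range (2 * k + 1), (-1) ^ i * a i ≤ 1 := by
  induction k generalizing a with
  | zero => simpa using (le_abs_self _).trans (hbound 0)
  | succ k ih =>
    have heven : (-1 : ℝ) ^ (2 * k) = 1 := (even_two_mul k).neg_one_pow
    rw [show 2 * (k + 1) + 1 = 2 * k + 1 + 1 + 1 by ring]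
    rcases le_or_gt (a (2 * k + 1 + 1)) (a (2 * k + 1)) with hlast | hlast
    · have hsplit : ∑ i ∈ range (2 * k + 1 + 1 + 1), (-1) ^ i * a i =
          ∑ i ∈ range (2 * k + 1), (-1) ^ i * a i - a (2 * k + 1) + a (2 * k + 1 + 1) := by
        rw [sum_range_succ, sum_range_succ]; simp only [pow_succ, heven]; ring
      linarith [ih ha hna hbound]
    rcases le_or_gt (a 0) (a 1) with hfirst | hfirst
    · have hsplit : ∑ i ∈ range (2 * k + 1 + 1 + 1), (-1) ^ i * a i =
          a 0 - a 1 + ∑ i ∈ range (2 * k + 1), (-1) ^ i * a (i + 2) := by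
        rw [sum_range_succ', sum_range_succ']; simp only [pow_succ]; ring_nf
      have := ih (a := fun i => a (i + 2)) (ha.comp_monotone (add_left_mono (a := 2)))
        (hna.comp_monotone (add_left_mono (a := 2))) (fun i => hbound (i + 2))
      linarith
    -- both ends rise, so the overall minimum is a valley below them
    obtain ⟨j, hj, hmin⟩ := exists_min_image (range (2 * k + 1 + 1 + 1)) a ⟨0, by simp⟩
    have hends : a 0 + a (2 * k + 1 + 1) ≤ 0 :=
      ha (Nat.zero_le j) (Nat.lt_succ_iff.1 (mem_range.1 hj))
        ((hmin 1 (by simp)).trans_lt hfirst) ((hmin _ (by simp)).trans_lt hlast)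
    have hsplit : ∑ i ∈ range (2 * k + 1 + 1 + 1), (-1) ^ i * a i =
        a 0 + a (2 * k + 1 + 1) + ∑ i ∈ range (2 * k + 1), (-1) ^ i * -a (i + 1) := by
      rw [sum_range_succ, sum_range_succ']; simp only [pow_succ, heven]; ring_nf
    have := ih (a := fun i => -a (i + 1)) (hna.comp_monotone (add_left_mono (a := 1)))
      (by convert ha.comp_monotone (add_left_mono (a := 1)) using 1; ext; simp)
      (fun i => by simpa using hbound (i + 1))
    linarith

def ConeOrdered {ι M : Type*} [Preorder ι] [AddCommMonoid M] [Module ℝ M] (u : ι → M) : Prop :=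
  ∀ ⦃i j l⦄, i ≤ j → j ≤ l → ∃ α γ : ℝ, 0 ≤ α ∧ 0 ≤ γ ∧ u j = α • u i + γ • u l

theorem ConeOrdered.map {ι M N : Type*} [Preorder ι] [AddCommMonoid M] [Module ℝ M]
    [AddCommMonoid N] [Module ℝ N] {u : ι → M} (hu : ConeOrdered u) (L : M →ₗ[ℝ] N) :
    ConeOrdered (L ∘ u) := by
  intro i j l hij hjl
  obtain ⟨α, γ, hα, hγ, h⟩ := hu hij hjl
  exact ⟨α, γ, hα, hγ, by simp [h]⟩

section NormedSpace

variable {E : Type*} [NormedAddCommGroup E] [NormedSpace ℝ E]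

theorem add_nonpos_of_lt_of_eq_smul_add_smul {p q s : E} (hp : ‖p‖ = 1) (hq : ‖q‖ = 1)
    (hs : ‖s‖ = 1) {α γ : ℝ} (hα : 0 ≤ α) (hγ : 0 ≤ γ) (hqps : q = α • p + γ • s)
    (f : E →ₗ[ℝ] ℝ) (hfp : f q < f p) (hfs : f q < f s) : f p + f s ≤ 0 := by
  wlog hsp : f s ≤ f p generalizing p s α γ
  · rw [add_comm]
    exact this hs hp hγ hα (by rw [hqps, add_comm]) hfs hfp (le_of_not_ge hsp)
  have hsum : 1 ≤ α + γ := by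
    simpa [← hqps, hq, norm_smul, hp, hs, abs_of_nonneg hα, abs_of_nonneg hγ]
      using norm_add_le (α • p) (γ • s)
  have hdiff : γ ≤ 1 + α := by
    have h := norm_sub_le q (α • p)
    rw [show q - α • p = γ • s by rw [hqps]; abel] at h
    simpa [hq, norm_smul, hp, hs, abs_of_nonneg hα, abs_of_nonneg hγ] using h
  have hfq : f q = α * f p + γ * f s := by simp [hqps]
  -- `(α + γ - 1) (f p + f s) = 2 (f q - f s) - (1 + α - γ) (f p - f s) < 0`
  by_contra! hpos
  nlinarith [mul_nonneg (sub_nonneg.2 hsum) hpos.le,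
    mul_nonneg (sub_nonneg.2 hdiff) (sub_nonneg.2 hsp)]

theorem ConeOrdered.valleyNonpos {ι : Type*} [Preorder ι] {u : ι → E} (hu : ConeOrdered u)
    (hu1 : ∀ i, ‖u i‖ = 1) (f : E →ₗ[ℝ] ℝ) : ValleyNonpos (fun i => f (u i)) := by
  intro i j l hij hjl hji hjl'
  obtain ⟨α, γ, hα, hγ, h⟩ := hu hij hjl
  exact add_nonpos_of_lt_of_eq_smul_add_smul (hu1 i) (hu1 j) (hu1 l) hα hγ h f hji hjl'

theorem ConeOrdered.norm_alternating_sum_le_one {k : ℕ} {u : Fin (2 * k + 1) → E}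
    (hu : ConeOrdered u) (hu1 : ∀ i, ‖u i‖ = 1) :
    ‖∑ i : Fin (2 * k + 1), (-1 : ℝ) ^ (i : ℕ) • u i‖ ≤ 1 := by
  obtain ⟨f, hf, hfA⟩ :=
    exists_dual_vector'' ℝ (∑ i : Fin (2 * k + 1), (-1 : ℝ) ^ (i : ℕ) • u i)
  -- extend `f ∘ u` to `ℕ`, constantly beyond the last index
  set a : ℕ → ℝ := fun n => f (u (Fin.clamp n (2 * k)))
  have hclamp : ∀ i : Fin (2 * k + 1), Fin.clamp i (2 * k) = i :=
    fun i => Fin.ext (min_eq_left (Nat.lt_succ_iff.1 i.isLt))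
  have ha : ValleyNonpos a := (hu.valleyNonpos hu1 f).comp_monotone Fin.clamp_monotone
  have hna : ValleyNonpos (-a) :=
    (hu.valleyNonpos hu1 (-f : E →L[ℝ] ℝ)).comp_monotone Fin.clamp_monotone
  have hbound : ∀ n, |a n| ≤ 1 := fun n => by
    simpa [hu1] using (f.le_opNorm (u (Fin.clamp n (2 * k)))).trans
      (mul_le_of_le_one_left (norm_nonneg _) hf)
  calc ‖∑ i : Fin (2 * k + 1), (-1 : ℝ) ^ (i : ℕ) • u i‖
        = ∑ n ∈ range (2 * k + 1), (-1) ^ n * a n := by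
          rw [← Fin.sum_univ_eq_sum_range]
          simp only [RCLike.ofReal_real_eq_id, id] at hfA
          simp [← hfA, a, hclamp]
    _ ≤ 1 := ha.alternating_sum_le_one hna hbound k

end NormedSpace

namespace Complex

theorem arg_conj_mul_of_arg_le {z w : ℂ} (hz : z ≠ 0) (hw : w ≠ 0) (hz0 : 0 ≤ arg z)
    (hzw : arg z ≤ arg w) (hwπ : arg w < π) : arg (conj z * w) = arg w - arg z := by
  have hzπ : arg z ≠ π := (hzw.trans_lt hwπ).ne
  rw [arg_mul ((map_ne_zero _).2 hz) hw, arg_conj, if_neg hzπ]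
  · ring
  · rw [arg_conj, if_neg hzπ]
    constructor <;> linarith [neg_pi_lt_arg w]

theorem im_conj_mul_nonneg_of_arg_le {z w : ℂ} (hz : z ≠ 0) (hw : w ≠ 0) (hz0 : 0 ≤ arg z)
    (hzw : arg z ≤ arg w) (hwπ : arg w < π) : 0 ≤ (conj z * w).im := by
  rw [← arg_nonneg_iff, arg_conj_mul_of_arg_le hz hw hz0 hzw hwπ, sub_nonneg]
  exact hzw

theorem arg_eq_of_im_conj_mul_eq_zero {z w : ℂ} (hz : z ≠ 0) (hw : w ≠ 0) (hz0 : 0 ≤ arg z)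
    (hzw : arg z ≤ arg w) (hwπ : arg w < π) (him : (conj z * w).im = 0) : arg z = arg w := by
  have harg := arg_conj_mul_of_arg_le hz hw hz0 hzw hwπ
  have hre : 0 ≤ (conj z * w).re := by
    by_contra! hre
    linarith [arg_eq_pi_iff.2 ⟨hre, him⟩]
  linarith [arg_eq_zero_iff.2 ⟨hre, him⟩]

theorem exists_nonneg_smul_add_smul_of_arg_le {z w y : ℂ} (hz : z ≠ 0) (hw : w ≠ 0)
    (hy : y ≠ 0) (hz0 : 0 ≤ arg z) (hzw : arg z ≤ arg w) (hwy : arg w ≤ arg y)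
    (hyπ : arg y < π) : ∃ α γ : ℝ, 0 ≤ α ∧ 0 ≤ γ ∧ w = α • z + γ • y := by
  have hzw' := im_conj_mul_nonneg_of_arg_le hz hw hz0 hzw (hwy.trans_lt hyπ)
  have hwy' := im_conj_mul_nonneg_of_arg_le hw hy (hz0.trans hzw) hwy hyπ
  have hzy' := im_conj_mul_nonneg_of_arg_le hz hy hz0 (hzw.trans hwy) hyπ
  -- Cramer's rule in the plane
  have hcramer : ((conj z * y).im : ℂ) * w = (conj w * y).im * z + (conj z * w).im * y := by
    apply Complex.ext <;>
      simp only [mul_im, mul_re, conj_re, conj_im, add_re, add_im, ofReal_re, ofReal_im] <;> ring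
  rcases hzy'.eq_or_lt with hzy | hzy
  · have hzw_eq : arg z = arg w := le_antisymm hzw
      (arg_eq_of_im_conj_mul_eq_zero hz hy hz0 (hzw.trans hwy) hyπ hzy.symm ▸ hwy)
    refine ⟨‖w‖ / ‖z‖, 0, by positivity, le_rfl, ?_⟩
    simpa [Complex.real_smul] using ((arg_eq_arg_iff hz hw).1 hzw_eq).symm
  · refine ⟨(conj w * y).im / (conj z * y).im, (conj z * w).im / (conj z * y).im,
      div_nonneg hwy' hzy.le, div_nonneg hzw' hzy.le, ?_⟩
    have hzy0 : ((conj z * y).im : ℂ) ≠ 0 := ofReal_ne_zero.2 hzy.ne'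
    rw [← mul_right_inj' hzy0, hcramer]
    simp only [Complex.real_smul, ofReal_div]
    generalize ((conj z * y).im : ℂ) = d at hzy0 ⊢
    field_simp

theorem exists_sign_arg_mem_Ico (z : ℂ) :
    ∃ s : ℝ, (s = 1 ∨ s = -1) ∧ arg (s • z) ∈ Set.Ico 0 π := by
  by_cases hz : arg z ∈ Set.Ico 0 π
  · exact ⟨1, Or.inl rfl, by simpa using hz⟩
  refine ⟨-1, Or.inr rfl, ?_⟩
  rw [neg_one_smul]
  rcases lt_or_ge (arg z) 0 with hneg | hnonneg
  · rw [arg_neg_eq_arg_add_pi_of_im_neg (arg_neg_iff.1 hneg)]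
    constructor <;> linarith [neg_pi_lt_arg z]
  · have hπ : arg z = π := le_antisymm (arg_le_pi z) (not_lt.1 fun h => hz ⟨hnonneg, h⟩)
    obtain ⟨hre, him⟩ := arg_eq_pi_iff.1 hπ
    rw [arg_eq_zero_iff.2 ⟨by rw [neg_re]; linarith, by simp [him]⟩]
    exact ⟨le_rfl, pi_pos⟩

end Complex

theorem coneOrdered_of_monotone_arg {ι : Type*} [Preorder ι] {z : ι → ℂ} (hz : ∀ i, z i ≠ 0)
    (harg : ∀ i, arg (z i) ∈ Set.Ico 0 π) (hmono : Monotone fun i => arg (z i)) :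
    ConeOrdered z :=
  fun i j l hij hjl => exists_nonneg_smul_add_smul_of_arg_le (hz i) (hz j) (hz l) (harg i).1
    (hmono hij) (hmono hjl) (harg l).2

theorem exists_sign_perm_coneOrdered {E : Type*} [AddCommGroup E] [Module ℝ E]
    (hdim : Module.finrank ℝ E = 2) {n : ℕ} (x : Fin n → E) (hx : ∀ i, x i ≠ 0) :
    ∃ (η : Fin n → ℝ) (σ : Equiv.Perm (Fin n)), (∀ i, η i = 1 ∨ η i = -1) ∧
      ConeOrdered fun j => η (σ j) • x (σ j) := by
  have : FiniteDimensional ℝ E := .of_finrank_pos (by omega)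
  let L : E ≃ₗ[ℝ] ℂ := LinearEquiv.ofFinrankEq E ℂ (by rw [hdim, finrank_real_complex])
  choose η hη harg using fun i => exists_sign_arg_mem_Ico (L (x i))
  set σ := Tuple.sort fun i => arg (η i • L (x i))
  have hz : ConeOrdered fun j => η (σ j) • L (x (σ j)) := by
    refine coneOrdered_of_monotone_arg (fun j => smul_ne_zero ?_ ?_) (fun j => harg (σ j))
      (Tuple.monotone_sort fun i => arg (η i • L (x i)))
    · rcases hη (σ j) with h | h <;> simp [h]
    · exact L.map_ne_zero_iff.2 (hx _)
  refine ⟨η, σ, hη, ?_⟩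
  simpa only [Function.comp_def, LinearEquiv.coe_coe, ← map_smul, LinearEquiv.symm_apply_apply]
    using hz.map L.symm.toLinearMap

/-- **Theorem A.** Any odd number of unit vectors in a normed plane can be
signed so that the signed sum has norm at most 1. -/
theorem odd_unit_vectors_balance {E : Type*} [NormedAddCommGroup E] [NormedSpace ℝ E]
    (hdim : Module.finrank ℝ E = 2) (k : ℕ) (x : Fin (2 * k + 1) → E)
    (hx : ∀ i, ‖x i‖ = 1) :
    ∃ ε : Fin (2 * k + 1) → ℝ, (∀ i, ε i = 1 ∨ ε i = -1) ∧
      ‖∑ i, ε i • x i‖ ≤ 1 := by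
  obtain ⟨η, σ, hη, hcone⟩ :=
    exists_sign_perm_coneOrdered hdim x fun i => norm_ne_zero_iff.1 (by simp [hx i])
  have hη1 : ∀ i, ‖η i • x i‖ = 1 := fun i => by rcases hη i with h | h <;> simp [h, hx i]
  refine ⟨fun i => (-1) ^ (σ.symm i : ℕ) * η i, fun i => ?_, ?_⟩
  · rcases neg_one_pow_eq_or ℝ (σ.symm i : ℕ) with h | h <;> rcases hη i with h' | h' <;>
      simp [h, h']
  · calc ‖∑ i, ((-1) ^ (σ.symm i : ℕ) * η i) • x i‖
          = ‖∑ j : Fin (2 * k + 1), (-1 : ℝ) ^ (j : ℕ) • η (σ j) • x (σ j)‖ := by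
            rw [← Equiv.sum_comp σ]; simp [mul_smul]
      _ ≤ 1 := ConeOrdered.norm_alternating_sum_le_one hcone fun j => hη1 (σ j)
end

section
/- Let n be odd and let P be a convex polygon in ℝ² with vertices ±x₁, …, ±x_n, where x₁, …, x_n occur in this order along the boundary of P. Then ∑_{i=1}^n (−1)^i x_i = (1/2) ∑_{i=1}^n (−1)^{i+1}(x_{i+1} − x_i) (with x_{n+1} := −x₁), and this vector lies in P. -/
/-!
Extend `x` to the sequence `X` with `X (k + n) = -X k`; it runs counterclockwise through all
vertices `±xᵢ` of `P`. As the vertices are extreme points, any three of them within a half-turn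
make a left turn, and hence the edges `eₖ = X (k + 1) - X k` satisfy `det (e a) (e b) > 0` for
`a < b < a + n`. For a linear functional `f` the values `f e₀, …, f eₙ₋₁` therefore change sign at
most once, so `∑ |f eⱼ|` telescopes to `2 |f (X k)|` for some `k`. Thus `f (∑ tⱼ eⱼ) ≤ max_P f`
whenever all `|tⱼ| ≤ 1/2`: the zonogon `∑ [-eⱼ/2, eⱼ/2]` lies in `P`, and the alternating sum is
one of its points.
-/

open Finset

def det2 (u v : ℝ × ℝ) : ℝ := u.1 * v.2 - u.2 * v.1

theorem det2_smul_eq (u v w : ℝ × ℝ) : det2 u w • v = det2 v w • u + det2 u v • w := by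
  ext <;> simp only [det2, Prod.smul_fst, Prod.smul_snd, Prod.fst_add, Prod.snd_add,
    smul_eq_mul] <;> ring

theorem det2_neg_neg (u v : ℝ × ℝ) : det2 (-u) (-v) = det2 u v := by
  simp only [det2, Prod.fst_neg, Prod.snd_neg]; ring

theorem pos_of_det2_pos {F : Type*} [FunLike F (ℝ × ℝ) ℝ] [LinearMapClass F ℝ (ℝ × ℝ) ℝ]
    (f : F) {u v w : ℝ × ℝ} (huv : 0 < det2 u v) (hvw : 0 < det2 v w) (huw : 0 < det2 u w)
    (hu : 0 < f u) (hw : 0 < f w) : 0 < f v := by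
  have h := congrArg f (det2_smul_eq u v w)
  simp only [map_add, map_smul, smul_eq_mul] at h
  exact pos_of_mul_pos_right (h ▸ by positivity) huw.le

theorem det2_sub_pos_of_turns {p q r s : ℝ × ℝ} (hpqs : 0 < det2 (q - p) (s - q))
    (hqrs : 0 < det2 (r - q) (s - r)) (hrsp : 0 < det2 (s - r) (-p - s))
    (hqsp : 0 < det2 (s - q) (-p - s)) (hspq : 0 < det2 (-p - s) (-q - -p)) :
    0 < det2 (q - p) (s - r) := by
  -- Cramer's rule: `p - q` lies in the cone spanned by `-p - s` and `q - s`.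
  have key : det2 (s - q) (-p - s) * det2 (q - p) (s - r) =
      det2 (q - p) (s - q) * det2 (s - r) (-p - s) +
        det2 (-p - s) (-q - -p) * det2 (r - q) (s - r) := by
    simp only [det2, Prod.fst_sub, Prod.snd_sub, Prod.fst_neg, Prod.snd_neg]; ring
  exact pos_of_mul_pos_right (key ▸ by positivity) hqsp.le

theorem Convex.smul_add_smul_mem_of_zero_mem {E : Type*} [AddCommGroup E] [Module ℝ E]
    {s : Set E} (hs : Convex ℝ s) (h0 : (0 : E) ∈ s) {a c : E} (ha : a ∈ s) (hc : c ∈ s)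
    {α γ : ℝ} (hα : 0 ≤ α) (hγ : 0 ≤ γ) (hαγ : α + γ ≤ 1) : α • a + γ • c ∈ s := by
  have hβ : 0 ≤ 1 - α - γ := by linarith
  have := hs.sum_mem (t := univ) (w := ![α, γ, 1 - α - γ]) (z := ![a, c, 0])
    (by simp [Fin.forall_fin_succ, hα, hγ, hβ]) (by simp [Fin.sum_univ_three])
    (by simp [Fin.forall_fin_succ, ha, hc, h0])
  simpa [Fin.sum_univ_three] using this

theorem det2_sub_pos_of_mem_extremePoints {P : Set (ℝ × ℝ)} (hP : Convex ℝ P)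
    (h0 : (0 : ℝ × ℝ) ∈ P) {a b c : ℝ × ℝ} (ha : a ∈ P) (hc : c ∈ P) (hb : b ∈ P.extremePoints ℝ)
    (hab : 0 < det2 a b) (hbc : 0 < det2 b c) (hac : 0 < det2 a c) :
    0 < det2 (b - a) (c - b) := by
  by_contra! hturn
  have hb_eq : b = (det2 b c / det2 a c) • a + (det2 a b / det2 a c) • c := by
    rw [div_eq_inv_mul, div_eq_inv_mul, mul_smul, mul_smul, ← smul_add, ← det2_smul_eq,
      inv_smul_smul₀ hac.ne']
  have hbH : b ∈ convexHull ℝ {0, a, c} := by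
    rw [hb_eq]
    refine (convex_convexHull ℝ _).smul_add_smul_mem_of_zero_mem
      (subset_convexHull ℝ _ (by simp)) (subset_convexHull ℝ _ (by simp))
      (subset_convexHull ℝ _ (by simp)) (by positivity) (by positivity) ?_
    rw [← add_div, div_le_one hac]
    have : det2 (b - a) (c - b) = det2 a b + det2 b c - det2 a c := by
      simp only [det2, Prod.fst_sub, Prod.snd_sub]; ring
    linarith
  have hHP : convexHull ℝ {0, a, c} ⊆ P :=
    convexHull_min (Set.insert_subset h0 (Set.insert_subset ha (Set.singleton_subset_iff.2 hc))) hP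
  have := extremePoints_convexHull_subset
    (inter_extremePoints_subset_extremePoints_of_subset hHP ⟨hbH, hb⟩)
  rcases this with rfl | rfl | rfl <;> simp [det2, mul_comm] at hab hbc

theorem exists_sum_abs_eq_of_nonpos_of_neg {d : ℕ → ℝ} {n : ℕ}
    (h : ∀ i j, i < j → j < n → d i < 0 → d j ≤ 0) :
    ∃ k ≤ n, ∑ j ∈ range n, |d j| = ∑ j ∈ range k, d j - ∑ j ∈ Ico k n, d j := by
  classical
  by_cases hneg : ∃ j, j < n ∧ d j < 0
  · obtain ⟨hk, hdk⟩ := Nat.find_spec hneg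
    refine ⟨Nat.find hneg, hk.le, ?_⟩
    rw [← sum_range_add_sum_Ico _ hk.le, sub_eq_add_neg, ← sum_neg_distrib]
    congr 1
    · refine sum_congr rfl fun j hj => abs_of_nonneg (not_lt.1 fun hdj => ?_)
      exact Nat.find_min hneg (mem_range.1 hj) ⟨(mem_range.1 hj).trans hk, hdj⟩
    · refine sum_congr rfl fun j hj => abs_of_nonpos ?_
      obtain ⟨hkj, hjn⟩ := mem_Ico.1 hj
      rcases hkj.eq_or_lt with rfl | hkj
      · exact hdk.le
      · exact h _ j hkj hjn hdk
  · push Not at hneg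
    refine ⟨n, le_rfl, ?_⟩
    rw [Ico_self, sum_empty, sub_zero]
    exact sum_congr rfl fun j hj => abs_of_nonneg (hneg j (mem_range.1 hj))

theorem exists_sum_abs_le {d : ℕ → ℝ} {n : ℕ}
    (hpos : ∀ p q r, p < q → q < r → r < n → 0 < d p → 0 < d r → 0 < d q)
    (hneg : ∀ p q r, p < q → q < r → r < n → d p < 0 → d r < 0 → d q < 0) :
    ∃ k ≤ n, ∑ j ∈ range n, |d j| ≤ |∑ j ∈ range k, d j - ∑ j ∈ Ico k n, d j| := by
  by_cases h : ∀ i j, i < j → j < n → d i < 0 → d j ≤ 0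
  · obtain ⟨k, hk, hsum⟩ := exists_sum_abs_eq_of_nonpos_of_neg h
    exact ⟨k, hk, hsum ▸ le_abs_self _⟩
  · push Not at h
    obtain ⟨i, j, hij, hjn, hi, hj⟩ := h
    have h' : ∀ i' j', i' < j' → j' < n → -d i' < 0 → -d j' ≤ 0 := by
      intro i' j' hij' hjn' hi'
      by_contra! hj'
      rw [neg_neg_iff_pos] at hi'
      rw [neg_pos] at hj'
      rcases lt_trichotomy j j' with hjj | rfl | hjj
      · exact (hneg i j j' (by omega) hjj hjn' hi hj').not_gt hj
      · linarith
      · exact (hpos i' j' j hij' hjj hjn hi' hj).not_gt hj'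
    obtain ⟨k, hk, hsum⟩ := exists_sum_abs_eq_of_nonpos_of_neg h'
    simp only [abs_neg, sum_neg_distrib, sub_neg_eq_add] at hsum
    refine ⟨k, hk, ?_⟩
    rw [hsum, ← abs_neg, neg_sub, neg_add_eq_sub]
    exact le_abs_self _

section Antiperiodic

variable {n : ℕ} {X : ℕ → ℝ × ℝ} {P : Set (ℝ × ℝ)}

theorem det2_turn_pos (hX : ∀ k, X (k + n) = -X k)
    (hdet : ∀ a b, a < b → b < a + n → 0 < det2 (X a) (X b))
    (hP : Convex ℝ P) (hext : ∀ k, X k ∈ P.extremePoints ℝ)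
    {a b c : ℕ} (hab : a < b) (hbc : b < c) (hca : c ≤ a + n) :
    0 < det2 (X b - X a) (X c - X b) := by
  rcases hca.lt_or_eq with hca | rfl
  · have h0 : (0 : ℝ × ℝ) ∈ P := by
      simpa only [hX, midpoint_self_neg] using hP.midpoint_mem (hext 0).1 (hext (0 + n)).1
    exact det2_sub_pos_of_mem_extremePoints hP h0 (hext a).1 (hext c).1 (hext b)
      (hdet a b hab (by omega)) (hdet b c hbc (by omega)) (hdet a c (by omega) hca)
  · have : det2 (X b - X a) (-X a - X b) = 2 * det2 (X a) (X b) := by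
      simp only [det2, Prod.fst_sub, Prod.snd_sub, Prod.fst_neg, Prod.snd_neg]; ring
    rw [hX, this]
    linarith [hdet a b hab (by omega)]

theorem det2_edge_pos (hX : ∀ k, X (k + n) = -X k)
    (hdet : ∀ a b, a < b → b < a + n → 0 < det2 (X a) (X b))
    (hP : Convex ℝ P) (hext : ∀ k, X k ∈ P.extremePoints ℝ)
    {a b : ℕ} (hab : a < b) (hba : b < a + n) :
    0 < det2 (X (a + 1) - X a) (X (b + 1) - X b) := by
  have turn {i j k : ℕ} (hij : i < j) (hjk : j < k) (hki : k ≤ i + n) :=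
    det2_turn_pos hX hdet hP hext hij hjk hki
  obtain rfl | hab' : b = a + 1 ∨ a + 1 < b := by omega
  · exact turn (by omega) (by omega) (by omega)
  obtain hba' | hba' : b + 1 = a + n ∨ b + 1 < a + n := by omega
  · have hflip : X (b + 1 + 1) - X (b + 1) = -(X (a + 1) - X a) := by
      rw [hba', add_right_comm, hX, hX, neg_sub_neg, neg_sub]
    have := turn (i := b) (j := b + 1) (k := b + 1 + 1) (by omega) (by omega) (by omega)
    rw [hflip] at this
    simp only [det2, Prod.fst_sub, Prod.snd_sub, Prod.fst_neg, Prod.snd_neg] at this ⊢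
    linarith
  · have hpqs := turn (i := a) (j := a + 1) (k := b + 1) (by omega) (by omega) (by omega)
    have hqrs := turn (i := a + 1) (j := b) (k := b + 1) (by omega) (by omega) (by omega)
    have hrsp := turn (i := b) (j := b + 1) (k := a + n) (by omega) (by omega) (by omega)
    have hqsp := turn (i := a + 1) (j := b + 1) (k := a + n) (by omega) (by omega) (by omega)
    have hspq := turn (i := b + 1) (j := a + n) (k := a + 1 + n) (by omega) (by omega) (by omega)
    rw [hX] at hrsp hqsp
    rw [hX, hX] at hspq
    exact det2_sub_pos_of_turns hpqs hqrs hrsp hqsp hspq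

theorem sum_smul_edge_mem (hX : ∀ k, X (k + n) = -X k)
    (hdet : ∀ a b, a < b → b < a + n → 0 < det2 (X a) (X b))
    (hP : Convex ℝ P) (hPc : IsClosed P) (hext : ∀ k, X k ∈ P.extremePoints ℝ)
    {t : ℕ → ℝ} (ht : ∀ j, |t j| ≤ 1 / 2) :
    ∑ j ∈ range n, t j • (X (j + 1) - X j) ∈ P := by
  by_contra hz
  obtain ⟨f, u, hfP, hfz⟩ := geometric_hahn_banach_closed_point hP hPc hz
  have hsign (g : StrongDual ℝ (ℝ × ℝ)) {p q r : ℕ} (hpq : p < q) (hqr : q < r) (hrn : r < n)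
      (hp : 0 < g (X (p + 1) - X p)) (hr : 0 < g (X (r + 1) - X r)) :
      0 < g (X (q + 1) - X q) :=
    pos_of_det2_pos g (det2_edge_pos hX hdet hP hext hpq (by omega))
      (det2_edge_pos hX hdet hP hext hqr (by omega))
      (det2_edge_pos hX hdet hP hext (hpq.trans hqr) (by omega)) hp hr
  obtain ⟨k, hk, hsum⟩ := exists_sum_abs_le (d := fun j => f (X (j + 1) - X j))
    (fun p q r hpq hqr hrn => hsign f hpq hqr hrn)
    (fun p q r hpq hqr hrn hp hr => by
      simpa using hsign (-f) hpq hqr hrn (by simpa using hp) (by simpa using hr))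
  have htele : ∑ j ∈ range k, f (X (j + 1) - X j) - ∑ j ∈ Ico k n, f (X (j + 1) - X j)
      = 2 * f (X k) := by
    simp only [map_sub]
    rw [sum_range_sub (fun j => f (X j)), sum_Ico_sub (fun j => f (X j)) hk]
    have hXn : X n = -X 0 := by simpa using hX 0
    rw [hXn, map_neg]
    ring
  have hbound : f (∑ j ∈ range n, t j • (X (j + 1) - X j)) ≤ |f (X k)| := calc
    _ = ∑ j ∈ range n, t j * f (X (j + 1) - X j) := by simp [map_sum, map_smul]
    _ ≤ ∑ j ∈ range n, 1 / 2 * |f (X (j + 1) - X j)| := by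
      refine sum_le_sum fun j _ => (le_abs_self _).trans ?_
      rw [abs_mul]
      exact mul_le_mul_of_nonneg_right (ht j) (abs_nonneg _)
    _ ≤ 1 / 2 * |2 * f (X k)| := by
      rw [← mul_sum, ← htele]
      exact mul_le_mul_of_nonneg_left hsum (by norm_num)
    _ = |f (X k)| := by rw [abs_mul, abs_two]; ring
  have hXk := hfP _ (hext k).1
  have hXkn := hfP _ (hext (k + n)).1
  rw [hX, map_neg] at hXkn
  linarith [abs_lt.2 ⟨by linarith, hXk⟩]

end Antiperiodic

def antiperiodicExtend {E : Type*} [AddCommGroup E] [Module ℝ E] (n : ℕ) (y : ℕ → E)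
    (k : ℕ) : E :=
  (-1 : ℝ) ^ (k / n) • y (k % n)

section antiperiodicExtend

variable {E : Type*} [AddCommGroup E] [Module ℝ E] {n : ℕ} {y : ℕ → E}

theorem antiperiodicExtend_of_lt {k : ℕ} (hk : k < n) : antiperiodicExtend n y k = y k := by
  simp [antiperiodicExtend, Nat.div_eq_of_lt hk, Nat.mod_eq_of_lt hk]

theorem antiperiodicExtend_add (hn : 0 < n) (k : ℕ) :
    antiperiodicExtend n y (k + n) = -antiperiodicExtend n y k := by
  simp [antiperiodicExtend, Nat.add_div_right k hn, pow_succ]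

theorem antiperiodicExtend_mem (hn : 0 < n) {S : Set E} (hy : ∀ j < n, y j ∈ S ∧ -y j ∈ S)
    (k : ℕ) : antiperiodicExtend n y k ∈ S := by
  have hk := hy (k % n) (Nat.mod_lt k hn)
  rcases neg_one_pow_eq_or ℝ (k / n) with h | h <;> simp [antiperiodicExtend, h, hk]

end antiperiodicExtend

theorem det2_antiperiodicExtend_pos {n : ℕ} (hn : 0 < n) {y : ℕ → ℝ × ℝ}
    (hy : ∀ i j, i < j → j < n → 0 < det2 (y i) (y j)) {a b : ℕ} (hab : a < b)
    (hba : b < a + n) : 0 < det2 (antiperiodicExtend n y a) (antiperiodicExtend n y b) := by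
  induction a using Nat.strong_induction_on generalizing b with
  | _ a ih =>
  rcases lt_or_ge a n with ha | ha
  · rw [antiperiodicExtend_of_lt ha]
    rcases lt_or_ge b n with hb | hb
    · rw [antiperiodicExtend_of_lt hb]
      exact hy a b hab hb
    · obtain ⟨b, rfl⟩ := Nat.exists_eq_add_of_le' hb
      rw [antiperiodicExtend_add hn, antiperiodicExtend_of_lt (by omega)]
      have := hy b a (by omega) ha
      simp only [det2, Prod.fst_neg, Prod.snd_neg] at this ⊢
      linarith
  · obtain ⟨a, rfl⟩ := Nat.exists_eq_add_of_le' ha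
    obtain ⟨b, rfl⟩ : ∃ b', b = b' + n := ⟨b - n, by omega⟩
    rw [antiperiodicExtend_add hn, antiperiodicExtend_add hn, det2_neg_neg]
    exact ih a (by omega) (by omega) (by omega)

theorem sum_neg_one_pow_smul_eq_half_sum_sub {E : Type*} [AddCommGroup E] [Module ℝ E] {n : ℕ}
    (hn : Odd n) {x : ℕ → E} (hx : x (n + 1) = -x 1) :
    ∑ i ∈ Icc 1 n, (-1 : ℝ) ^ i • x i
      = (1 / 2 : ℝ) • ∑ i ∈ Icc 1 n, (-1 : ℝ) ^ (i + 1) • (x (i + 1) - x i) := by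
  set g : ℕ → E := fun i => (-1 : ℝ) ^ i • x i
  have hterm (i : ℕ) :
      (-1 : ℝ) ^ (i + 1) • (x (i + 1) - x i) = (g (i + 1) - g i) + (2 : ℝ) • g i := by
    simp only [g, pow_succ]; module
  have htele : ∑ i ∈ Icc 1 n, (g (i + 1) - g i) = 0 := by
    rw [← Ico_add_one_right_eq_Icc, sum_Ico_sub g (by omega)]
    simp [g, hx, hn.add_one.neg_one_pow]
  simp only [hterm, sum_add_distrib, htele, zero_add, ← smul_sum, smul_smul]
  norm_num

theorem zonogon_lemma_general (n : ℕ) (hn : Odd n) (x : ℕ → ℝ × ℝ)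
    (hdet : ∀ i ∈ Finset.Icc 1 n, ∀ j ∈ Finset.Icc 1 n, i < j →
      0 < (x i).1 * (x j).2 - (x i).2 * (x j).1)
    (P : Set (ℝ × ℝ))
    (hP : P = convexHull ℝ
      ((fun i => x i) '' Set.Icc 1 n ∪ (fun i => -x i) '' Set.Icc 1 n))
    (hvert : ∀ i ∈ Set.Icc 1 n,
      x i ∈ Set.extremePoints ℝ P ∧ -x i ∈ Set.extremePoints ℝ P)
    (hnext : x (n + 1) = -x 1) :
    ∑ i ∈ Finset.Icc 1 n, ((-1 : ℝ)) ^ i • x i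
        = (1 / 2 : ℝ) • ∑ i ∈ Finset.Icc 1 n, ((-1 : ℝ)) ^ (i + 1) • (x (i + 1) - x i)
      ∧ ∑ i ∈ Finset.Icc 1 n, ((-1 : ℝ)) ^ i • x i ∈ P := by
  have hS := sum_neg_one_pow_smul_eq_half_sum_sub hn hnext
  refine ⟨hS, ?_⟩
  have hn0 : 0 < n := hn.pos
  set X := antiperiodicExtend n fun j => x (j + 1)
  have hX : ∀ k, X (k + n) = -X k := antiperiodicExtend_add hn0
  have hXx (j : ℕ) (hj : j ≤ n) : X j = x (j + 1) := by
    rcases hj.lt_or_eq with hj | rfl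
    · exact antiperiodicExtend_of_lt hj
    · rw [hnext, ← zero_add j, hX]
      exact congrArg Neg.neg (antiperiodicExtend_of_lt hn0)
  have hXdet (a b : ℕ) : a < b → b < a + n → 0 < det2 (X a) (X b) :=
    det2_antiperiodicExtend_pos hn0 fun i j hij hj => hdet (i + 1)
      (mem_Icc.2 ⟨by omega, by omega⟩) (j + 1) (mem_Icc.2 ⟨by omega, hj⟩) (by omega)
  have hXext : ∀ k, X k ∈ P.extremePoints ℝ :=
    antiperiodicExtend_mem hn0 fun j hj => hvert (j + 1) ⟨by omega, hj⟩
  have hfin : (((fun i => x i) '' Set.Icc 1 n ∪ (fun i => -x i) '' Set.Icc 1 n)).Finite :=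
    ((Set.finite_Icc 1 n).image _).union ((Set.finite_Icc 1 n).image _)
  have hmem := sum_smul_edge_mem hX hXdet (hP ▸ convex_convexHull ℝ _)
    (hP ▸ (hfin.isCompact_convexHull ℝ).isClosed) hXext (t := fun j => 1 / 2 * (-1) ^ j)
    (by simp [abs_mul])
  rw [hS, ← Ico_add_one_right_eq_Icc, sum_Ico_eq_sum_range, smul_sum]
  convert hmem using 1
  rw [add_tsub_cancel_right]
  refine sum_congr rfl fun j hj => ?_
  rw [mem_range] at hj
  rw [hXx j hj.le, hXx (j + 1) hj, add_comm 1 j, pow_succ, pow_succ]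
  module

/-- **Zonogon lemma.** If `n` is odd and `P` is a convex polygon with vertices
`±x 1, …, ±x n` occurring in this cyclic order on the boundary (encoded by the
positivity of all determinants `det (x i) (x j)` for `i < j`, which says the
`x i` lie in angular order in an open half-plane, together with the extremality
of the `±x i` in `P`), then
`∑ (-1)^i x i = (1/2) ∑ (-1)^(i+1) (x (i+1) - x i)` (with `x (n+1) = -x 1`),
and this vector lies in `P`. -/
theorem zonogon_lemma (n : ℕ) (hn : Odd n) (hn1 : 1 ≤ n) (x : ℕ → ℝ × ℝ)
    (hdet : ∀ i ∈ Finset.Icc 1 n, ∀ j ∈ Finset.Icc 1 n, i < j →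
      0 < (x i).1 * (x j).2 - (x i).2 * (x j).1)
    (P : Set (ℝ × ℝ))
    (hP : P = convexHull ℝ
      ((fun i => x i) '' Set.Icc 1 n ∪ (fun i => -x i) '' Set.Icc 1 n))
    (hvert : ∀ i ∈ Set.Icc 1 n,
      x i ∈ Set.extremePoints ℝ P ∧ -x i ∈ Set.extremePoints ℝ P)
    (hnext : x (n + 1) = -x 1) :
    ∑ i ∈ Finset.Icc 1 n, ((-1 : ℝ)) ^ i • x i
        = (1 / 2 : ℝ) • ∑ i ∈ Finset.Icc 1 n, ((-1 : ℝ)) ^ (i + 1) • (x (i + 1) - x i)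
      ∧ ∑ i ∈ Finset.Icc 1 n, ((-1 : ℝ)) ^ i • x i ∈ P :=
  zonogon_lemma_general n hn x hdet P hP hvert hnext
end

section
/- Let x₁, x₂, … be a sequence of unit vectors in the Euclidean plane. Then there exist signs ε₁, ε₂, … ∈ {±1} such that for every k ∈ ℕ, ‖∑_{i=1}^{2k} ε_i x_i‖ ≤ √2. -/
/-!
Choose the signs two at a time, keeping the running sum `s` in the disc `‖s‖ ^ 2 ≤ 2`.
For unit vectors `u, v` the vectors `u + v` and `u - v` are orthogonal, with
`T + T' = 4` for `T = ‖u + v‖ ^ 2`, `T' = ‖u - v‖ ^ 2`. Adding `±(u + v)` with the sign opposite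
to `⟪s, u + v⟫` changes `‖s‖ ^ 2` by `T - 2 |⟪s, u + v⟫|`, and similarly for `u - v`.
In the plane `s` is determined by these two inner products, which yields
`⟪s, u + v⟫ ^ 2 T' + ⟪s, u - v⟫ ^ 2 T = ‖s‖ ^ 2 T T'`; if both moves left the disc, this
identity would force `T T' < (2 - ‖s‖ ^ 2) ^ 2` although `T` and `T'` both exceed `2 - ‖s‖ ^ 2`.
-/

open scoped RealInnerProductSpace

theorem exists_signs_forall_sum_Icc_two_mul_mem {R E : Type*} [Ring R] [AddCommGroup E]
    [Module R E] (A : Set E) (h0 : (0 : E) ∈ A) (x : ℕ → E)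
    (hstep : ∀ k, ∀ s ∈ A, ∃ ε δ : R, (ε = 1 ∨ ε = -1) ∧ (δ = 1 ∨ δ = -1) ∧
      s + ε • x (2 * k + 1) + δ • x (2 * k + 2) ∈ A) :
    ∃ ε : ℕ → R, (∀ i, ε i = 1 ∨ ε i = -1) ∧
      ∀ k, ∑ i ∈ Finset.Icc 1 (2 * k), ε i • x i ∈ A := by
  choose σ τ hσ hτ hA using fun k (s : A) => hstep k s s.2
  let S : ℕ → A := fun k => Nat.rec ⟨0, h0⟩
    (fun k s => ⟨s + σ k s • x (2 * k + 1) + τ k s • x (2 * k + 2), hA k s⟩) k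
  -- `i = 2k+1` and `i = 2k+2` both give `(i - 1) / 2 = k`; at `i = 0` the value is a spare sign
  let ε : ℕ → R := fun i => if Even i then τ ((i - 1) / 2) (S ((i - 1) / 2))
    else σ ((i - 1) / 2) (S ((i - 1) / 2))
  have hε_odd (k : ℕ) : ε (2 * k + 1) = σ k (S k) := by
    simp [ε, parity_simps]
  have hε_even (k : ℕ) : ε (2 * k + 2) = τ k (S k) := by
    simp [ε, show (2 * k + 1) / 2 = k by omega, parity_simps]
  have hsum (k : ℕ) : ∑ i ∈ Finset.Icc 1 (2 * k), ε i • x i = (S k).1 := by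
    induction k with
    | zero => simp [S]
    | succ k ih =>
      rw [show 2 * (k + 1) = 2 * k + 1 + 1 by ring, Finset.sum_Icc_succ_top (by omega),
        Finset.sum_Icc_succ_top (by omega), ih, hε_odd, hε_even]
  refine ⟨ε, fun i => ?_, fun k => hsum k ▸ (S k).2⟩
  by_cases hi : Even i
  · simpa [ε, hi] using hτ _ _
  · simpa [ε, hi] using hσ _ _

theorem exists_sign_norm_add_smul_sq {E : Type*} [NormedAddCommGroup E]
    [InnerProductSpace ℝ E] (s w : E) :
    ∃ ε : ℝ, (ε = 1 ∨ ε = -1) ∧ ‖s + ε • w‖ ^ 2 = ‖s‖ ^ 2 + ‖w‖ ^ 2 - 2 * |⟪s, w⟫| := by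
  have hnorm_sq (ε : ℝ) (hε : ε ^ 2 = 1) :
      ‖s + ε • w‖ ^ 2 = ‖s‖ ^ 2 + ‖w‖ ^ 2 + 2 * ε * ⟪s, w⟫ := by
    rw [norm_add_sq_real, norm_smul, mul_pow, Real.norm_eq_abs, sq_abs, hε, inner_smul_right]
    ring
  rcases le_or_gt 0 ⟪s, w⟫ with h | h
  · exact ⟨-1, .inr rfl, by rw [hnorm_sq _ (by norm_num), abs_of_nonneg h]; ring⟩
  · exact ⟨1, .inl rfl, by rw [hnorm_sq _ (by norm_num), abs_of_neg h]; ring⟩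

theorem inner_sq_mul_norm_sq_add_inner_sq_mul_norm_sq (s w w' : EuclideanSpace ℝ (Fin 2))
    (h : ⟪w, w'⟫ = 0) :
    ⟪s, w⟫ ^ 2 * ‖w'‖ ^ 2 + ⟪s, w'⟫ ^ 2 * ‖w‖ ^ 2 = ‖s‖ ^ 2 * ‖w‖ ^ 2 * ‖w'‖ ^ 2 := by
  simp only [EuclideanSpace.norm_sq_eq, EuclideanSpace.inner_eq_star_dotProduct, dotProduct,
    Fin.sum_univ_two, star_trivial, Real.norm_eq_abs, sq_abs] at h ⊢
  linear_combination (2 * (s 0 * w 0 + s 1 * w 1) * (s 0 * w' 0 + s 1 * w' 1)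
    - (s 0 ^ 2 + s 1 ^ 2) * (w 0 * w' 0 + w 1 * w' 1)) * h

theorem add_sub_two_mul_abs_le_or {S T T' a b : ℝ} (hS : S ≤ 2)
    (hTT' : T + T' = 4) (h : a ^ 2 * T' + b ^ 2 * T = S * T * T') :
    S + T - 2 * |a| ≤ 2 ∨ S + T' - 2 * |b| ≤ 2 := by
  by_contra! hlt
  obtain ⟨ha, hb⟩ := hlt
  set q := 2 - S
  have hq : 0 ≤ q := by linarith
  have hTq : q < T := by linarith [abs_nonneg a]
  have hT'q : q < T' := by linarith [abs_nonneg b]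
  have ha2 : 4 * a ^ 2 < (T - q) ^ 2 := by nlinarith [abs_nonneg a, sq_abs a]
  have hb2 : 4 * b ^ 2 < (T' - q) ^ 2 := by nlinarith [abs_nonneg b, sq_abs b]
  have hlt : 4 * (S * T * T') < 4 * (T * T') - 4 * q * (T * T') + 4 * q ^ 2 := calc
    4 * (S * T * T') = 4 * a ^ 2 * T' + 4 * b ^ 2 * T := by linear_combination -4 * h
    _ < (T - q) ^ 2 * T' + (T' - q) ^ 2 * T := by
      have := mul_le_mul_of_nonneg_right ha2.le (hq.trans hT'q.le)
      have := mul_lt_mul_of_pos_right hb2 (hq.trans_lt hTq)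
      linarith
    _ = 4 * (T * T') - 4 * q * (T * T') + 4 * q ^ 2 := by
      linear_combination (T * T' + q ^ 2) * hTT'
  have hTT'q : T * T' < q ^ 2 := by nlinarith
  nlinarith [mul_lt_mul'' hTq hT'q hq hq]

theorem exists_signs_norm_add_add_sq_le_two (s u v : EuclideanSpace ℝ (Fin 2))
    (hu : ‖u‖ = 1) (hv : ‖v‖ = 1) (hs : ‖s‖ ^ 2 ≤ 2) :
    ∃ ε δ : ℝ, (ε = 1 ∨ ε = -1) ∧ (δ = 1 ∨ δ = -1) ∧ ‖s + ε • u + δ • v‖ ^ 2 ≤ 2 := by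
  have horth : ⟪u + v, u - v⟫ = 0 := (real_inner_add_sub_eq_zero_iff u v).2 (hu.trans hv.symm)
  have hsum : ‖u + v‖ ^ 2 + ‖u - v‖ ^ 2 = 4 := by
    rw [parallelogram_law_with_norm ℝ, hu, hv]; norm_num
  obtain ⟨ε, hε, hnorm⟩ := exists_sign_norm_add_smul_sq s (u + v)
  obtain ⟨ε', hε', hnorm'⟩ := exists_sign_norm_add_smul_sq s (u - v)
  rcases add_sub_two_mul_abs_le_or hs hsum
    (inner_sq_mul_norm_sq_add_inner_sq_mul_norm_sq s _ _ horth) with h | h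
  · refine ⟨ε, ε, hε, hε, ?_⟩
    rwa [add_assoc, ← smul_add, hnorm]
  · refine ⟨ε', -ε', hε', by rcases hε' with rfl | rfl <;> norm_num, ?_⟩
    rwa [add_assoc, neg_smul, ← sub_eq_add_neg, ← smul_sub, hnorm']

/-- In the Euclidean plane, for any sequence of unit vectors there are signs
such that all partial sums of even length have norm at most `√2`. -/
theorem online_balancing_euclidean_plane
    (x : ℕ → EuclideanSpace ℝ (Fin 2)) (hx : ∀ i, 1 ≤ i → ‖x i‖ = 1) :
    ∃ ε : ℕ → ℝ, (∀ i, ε i = 1 ∨ ε i = -1) ∧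
      ∀ k : ℕ, ‖∑ i ∈ Finset.Icc 1 (2 * k), ε i • x i‖ ≤ Real.sqrt 2 := by
  obtain ⟨ε, hε, hsum⟩ := exists_signs_forall_sum_Icc_two_mul_mem {s | ‖s‖ ^ 2 ≤ 2}
    (by simp) x fun k s hs =>
      exists_signs_norm_add_add_sq_le_two s _ _ (hx _ (by omega)) (hx _ (by omega)) hs
  exact ⟨ε, hε, fun k => Real.le_sqrt_of_sq_le (hsum k)⟩
end

section
/- Let w, a, b be vectors in a normed plane with ‖w‖ ≤ 2 and ‖a‖ = ‖b‖ = 1. Then there exist signs δ, ε ∈ {±1} such that ‖w + δa + εb‖ ≤ 2. -/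
/-!
Write `w = p • a + q • b`; replacing `a`, `b` by `±a`, `±b` and swapping them makes
`p ≥ q ≥ 0`, and then `w - a - b` works. The reverse triangle inequality gives
`p - q ≤ ‖w‖ ≤ 2`. If `q ≤ 1`, the triangle inequality bounds `‖w - a - b‖` by
`|p - 1| + 1 - q ≤ 2`; if `q ≥ 1`, then `q • (w - a - b) = (q - 1) • w + (p - q) • a`
bounds it by `((q - 1) * 2 + (p - q)) / q ≤ 2`.
If `a` and `b` are dependent, then `b = ±a` and the signs can cancel them.
-/

section Normed

variable {E : Type*} [SeminormedAddCommGroup E] [NormedSpace ℝ E]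

theorem norm_sub_one_smul_add_sub_one_smul_le_two {a b : E} {p q : ℝ}
    (ha : ‖a‖ = 1) (hb : ‖b‖ ≤ 1) (hq : 0 ≤ q) (hqp : q ≤ p)
    (hw : ‖p • a + q • b‖ ≤ 2) : ‖(p - 1) • a + (q - 1) • b‖ ≤ 2 := by
  have hpq : p - q ≤ 2 := calc
    p - q ≤ ‖p • a‖ - ‖q • b‖ := by
      rw [norm_smul_of_nonneg (hq.trans hqp), norm_smul_of_nonneg hq, ha]
      nlinarith
    _ ≤ ‖p • a + q • b‖ := norm_sub_le_norm_add _ _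
    _ ≤ 2 := hw
  rcases le_total q 1 with hq1 | hq1
  · calc ‖(p - 1) • a + (q - 1) • b‖ ≤ |p - 1| * ‖a‖ + |q - 1| * ‖b‖ := by
          simpa only [norm_smul, Real.norm_eq_abs] using norm_add_le ((p - 1) • a) ((q - 1) • b)
      _ ≤ |p - 1| + (1 - q) := by
          rw [ha, abs_of_nonpos (by linarith : q - 1 ≤ 0)]; nlinarith
      _ ≤ 2 := by cases abs_cases (p - 1) <;> linarith
  · have hscaled : q * ‖(p - 1) • a + (q - 1) • b‖ ≤ q * 2 := calc
      q * ‖(p - 1) • a + (q - 1) • b‖ = ‖(q - 1) • (p • a + q • b) + (p - q) • a‖ := by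
          rw [← norm_smul_of_nonneg hq]; congr 1; module
      _ ≤ (q - 1) * ‖p • a + q • b‖ + (p - q) * ‖a‖ := by
          refine (norm_add_le _ _).trans_eq ?_
          rw [norm_smul_of_nonneg (by linarith), norm_smul_of_nonneg (by linarith)]
      _ ≤ q * 2 := by rw [ha]; nlinarith
    exact le_of_mul_le_mul_left hscaled (by linarith)

theorem norm_sub_one_smul_add_sub_one_smul_le_two_of_nonneg {a b : E} {p q : ℝ}
    (ha : ‖a‖ = 1) (hb : ‖b‖ = 1) (hp : 0 ≤ p) (hq : 0 ≤ q)
    (hw : ‖p • a + q • b‖ ≤ 2) : ‖(p - 1) • a + (q - 1) • b‖ ≤ 2 := by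
  rcases le_total q p with hqp | hpq
  · exact norm_sub_one_smul_add_sub_one_smul_le_two ha hb.le hq hqp hw
  · rw [add_comm] at hw ⊢
    exact norm_sub_one_smul_add_sub_one_smul_le_two hb ha.le hp hpq hw

theorem exists_sign_mul_nonneg_eq (x : ℝ) :
    ∃ σ : ℝ, (σ = 1 ∨ σ = -1) ∧ ∃ r, 0 ≤ r ∧ x = σ * r := by
  rcases le_total 0 x with hx | hx
  · exact ⟨1, Or.inl rfl, x, hx, (one_mul x).symm⟩
  · exact ⟨-1, Or.inr rfl, -x, neg_nonneg.mpr hx, by ring⟩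

theorem exists_signs_norm_smul_add_smul_add_le_two {a b : E} {p q : ℝ}
    (ha : ‖a‖ = 1) (hb : ‖b‖ = 1) (hw : ‖p • a + q • b‖ ≤ 2) :
    ∃ δ ε : ℝ, (δ = 1 ∨ δ = -1) ∧ (ε = 1 ∨ ε = -1) ∧ ‖p • a + q • b + δ • a + ε • b‖ ≤ 2 := by
  obtain ⟨σ, hσ, r, hr, rfl⟩ := exists_sign_mul_nonneg_eq p
  obtain ⟨τ, hτ, s, hs, rfl⟩ := exists_sign_mul_nonneg_eq q
  have hσa : ‖σ • a‖ = 1 := by rcases hσ with rfl | rfl <;> simpa using ha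
  have hτb : ‖τ • b‖ = 1 := by rcases hτ with rfl | rfl <;> simpa using hb
  have hw' : ‖r • σ • a + s • τ • b‖ ≤ 2 := by
    rwa [smul_smul, smul_smul, mul_comm r, mul_comm s]
  refine ⟨-σ, -τ, by rcases hσ with rfl | rfl <;> norm_num,
    by rcases hτ with rfl | rfl <;> norm_num, ?_⟩
  convert norm_sub_one_smul_add_sub_one_smul_le_two_of_nonneg hσa hτb hr hs hw' using 2
  module

end Normed

theorem exists_eq_smul_add_smul_of_finrank_eq_two {K V : Type*} [DivisionRing K]
    [AddCommGroup V] [Module K V] (hdim : Module.finrank K V = 2) {a b : V}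
    (hab : LinearIndependent K ![a, b]) (w : V) : ∃ p q : K, w = p • a + q • b := by
  have hspan := hab.span_eq_top_of_card_eq_finrank (by simp [hdim])
  rw [Matrix.range_cons_cons_empty] at hspan
  obtain ⟨p, q, h⟩ := Submodule.mem_span_pair.mp (hspan ▸ Submodule.mem_top : w ∈ _)
  exact ⟨p, q, h.symm⟩

theorem eq_or_eq_neg_of_not_linearIndependent {E : Type*} [NormedAddCommGroup E]
    [NormedSpace ℝ E] {a b : E} (ha : ‖a‖ = 1) (hb : ‖b‖ = 1)
    (hab : ¬LinearIndependent ℝ ![a, b]) : a = b ∨ a = -b := by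
  have hb0 : b ≠ 0 := norm_ne_zero_iff.mp (by rw [hb]; exact one_ne_zero)
  obtain ⟨l, rfl⟩ : ∃ l : ℝ, l • b = a := by
    simpa [linearIndependent_fin2, hb0] using hab
  have hl : |l| = 1 := by rwa [norm_smul, hb, mul_one, Real.norm_eq_abs] at ha
  rcases abs_eq zero_le_one |>.mp hl with rfl | rfl
  · simp
  · simp

/-- If `‖w‖ ≤ 2` and `a, b` are unit vectors in a normed plane, then signs
`δ, ε` can be chosen so that `‖w + δa + εb‖ ≤ 2`. -/
theorem online_step_normed_plane {E : Type*} [NormedAddCommGroup E] [NormedSpace ℝ E]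
    (hdim : Module.finrank ℝ E = 2) (w a b : E)
    (hw : ‖w‖ ≤ 2) (ha : ‖a‖ = 1) (hb : ‖b‖ = 1) :
    ∃ δ ε : ℝ, (δ = 1 ∨ δ = -1) ∧ (ε = 1 ∨ ε = -1) ∧ ‖w + δ • a + ε • b‖ ≤ 2 := by
  by_cases hab : LinearIndependent ℝ ![a, b]
  · obtain ⟨p, q, rfl⟩ := exists_eq_smul_add_smul_of_finrank_eq_two hdim hab w
    exact exists_signs_norm_smul_add_smul_add_le_two ha hb hw
  · rcases eq_or_eq_neg_of_not_linearIndependent ha hb hab with rfl | rfl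
    · exact ⟨1, -1, Or.inl rfl, Or.inr rfl, by simpa using hw⟩
    · exact ⟨1, 1, Or.inl rfl, Or.inl rfl, by simpa using hw⟩
end

section
/- The bound 2 in the online balancing theorem is sharp in the rectilinear plane: in ℝ² with the ℓ¹ norm, if e₁, e₂ are adjacent vertices of the unit ball and the sequence is x_{2i−1} = e₁, x_{2i} = e₂, then every choice of signs ε_i ∈ {±1} yields some k with ‖∑_{i=1}^{2k} ε_i x_i‖ ≥ 2. -/
/-- The bound 2 in the online balancing theorem is sharp in the rectilinear
plane (`ℝ²` with the `ℓ¹` norm): with `e₁ = (1,0)` and `e₂ = (0,1)` adjacent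
vertices of the unit ball, and the alternating sequence `x (2i-1) = e₁`,
`x (2i) = e₂`, every choice of signs yields some `k ≥ 1` with
`‖∑_{i=1}^{2k} ε i • x i‖ ≥ 2`. -/
theorem online_balancing_sharp_rectilinear
    (x : ℕ → PiLp 1 (fun _ : Fin 2 => ℝ))
    (hx : ∀ i : ℕ, x (2 * i + 1) = (WithLp.equiv 1 (∀ _ : Fin 2, ℝ)).symm ![1, 0] ∧
      x (2 * i + 2) = (WithLp.equiv 1 (∀ _ : Fin 2, ℝ)).symm ![0, 1]) :
    ∀ ε : ℕ → ℝ, (∀ i, ε i = 1 ∨ ε i = -1) →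
      ∃ k : ℕ, 1 ≤ k ∧ 2 ≤ ‖∑ i ∈ Finset.Icc 1 (2 * k), ε i • x i‖ := by
  intro ε hε
  refine ⟨1, le_refl 1, ?_⟩
  obtain ⟨h1, h2⟩ := hx 0
  norm_num at h1 h2
  have : Finset.Icc 1 (2 * 1) = ({1, 2} : Finset ℕ) := by decide
  rw [this, Finset.sum_pair (by norm_num), h1, h2]
  have e1 : |ε 1| = 1 := by rcases hε 1 with h | h <;> simp [h]
  have e2 : |ε 2| = 1 := by rcases hε 2 with h | h <;> simp [h]
  rw [PiLp.norm_eq_sum (by norm_num)]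
  simp [PiLp.toLp_apply, Fin.sum_univ_two, Matrix.cons_val_zero,
    Matrix.cons_val_one, abs_mul, e1, e2, Real.rpow_natCast]
  norm_num
end

section
/- Under the hypotheses of Theorem B (for all distinct i,j ∈ {1,…,n} the closed angle ∠p_i p₀ p_j contains a ray opposite some ray p₀p_k), if moreover p₀ does not lie on any segment [p_i, p_j], then n is odd, and when p₁, …, p_n are ordered counterclockwise around p₀, the ray opposite p₀p_k contained in the open angle ∠p_i p₀ p_{i+1} satisfies k ≡ i + (n+1)/2 (mod n). -/
/-!
Lift the directions of the vectors `p i - p 0` to a strictly increasing sequence of angles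
`α : ℤ → ℝ` with `α (j + n) = α j + 2π`. Because `p 0` lies on no segment `[p i, p j]`, the cone
condition of Theorem B for two consecutive points puts an antipode `α k + π` strictly inside
every gap `(α j, α (j + 1))`. Choosing one such `k = g j` per gap gives a strictly increasing
`g : ℤ → ℤ` which, by periodicity, cannot gain more than one per step on average; hence
`g j = j + m`. Taking antipodes twice turns a direction by `2π`, i.e. shifts its index by `n`,
so `2m + n = 1`: `n` is odd and `k ≡ i + (n + 1) / 2 (mod n)`.
-/

open Real

lemma Int.eq_add_apply_zero_of_strictMono {g : ℤ → ℤ} (hg : StrictMono g) {d : ℤ}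
    (hd : 0 < d) (h : ∀ j, g (j + d) < g j + d + 1) (j : ℤ) : g j = j + g 0 := by
  have hsucc : ∀ j, g j + 1 ≤ g (j + 1) := fun j => Int.add_one_le_of_lt (hg (lt_add_one j))
  have hmono : Monotone fun j => g j - j := monotone_int_of_le_succ fun j => by linarith [hsucc j]
  have hstep : ∀ j, g (j + 1) = g j + 1 := fun j => by
    have : g (j + 1) - (j + 1) ≤ g (j + d) - (j + d) := hmono (by omega)
    linarith [h j, hsucc j]
  induction j using Int.induction_on with
  | zero => simp
  | succ i ih => rw [hstep, ih]; ring
  | pred i ih =>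
    have := hstep (-i - 1)
    rw [sub_add_cancel] at this
    linarith

theorem exists_shift_of_forall_translate_mem_gap {α : ℤ → ℝ} (hα : StrictMono α) {n : ℤ}
    (hn : 0 < n) {c : ℝ} (hper : ∀ j, α (j + n) = α j + 2 * c)
    (hgap : ∀ j, ∃ k, α j < α k + c ∧ α k + c < α (j + 1)) :
    ∃ m, 2 * m = 1 - n ∧ ∀ j k, α j < α k + c → α k + c < α (j + 1) → k = j + m := by
  have hsep : ∀ {j j' k k'}, α k + c < α (j + 1) → α j' < α k' + c → j + 1 ≤ j' →
      k < k' :=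
    fun h h' hj => hα.lt_iff_lt.mp (by linarith [hα.monotone hj])
  choose g hg using hgap
  have hper₂ : ∀ j, α (j + 2 * n) = α j + 4 * c := fun j => by
    rw [two_mul, ← add_assoc, hper, hper]; ring
  -- `α (g j + 2n) + c` already lies beyond the gap of `j + 2n - 1`
  have hwindow : ∀ j, g (j + (2 * n - 1)) < g j + (2 * n - 1) + 1 := fun j => by
    have hlast := (hg (j + (2 * n - 1))).2
    rw [show j + (2 * n - 1) + 1 = j + 2 * n by ring, hper₂] at hlast
    rw [← hα.lt_iff_lt, show g j + (2 * n - 1) + 1 = g j + 2 * n by ring, hper₂]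
    linarith [(hg j).1]
  obtain ⟨m, hshift⟩ : ∃ m, ∀ j, g j = j + m := ⟨g 0, Int.eq_add_apply_zero_of_strictMono
    (fun j j' hj => hsep (hg j).2 (hg j').1 hj) (by omega) hwindow⟩
  simp only [hshift] at hg
  refine ⟨m, ?_, fun j k h h' => ?_⟩
  · obtain ⟨h₀, -⟩ := hg 0
    obtain ⟨-, h₁⟩ := hg 1
    obtain ⟨hm₀, hm₁⟩ := hg m
    rw [zero_add] at h₀
    rw [add_comm 1 m, one_add_one_eq_two] at h₁
    have hlo : α 0 < α (m + m + n) := by rw [hper]; linarith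
    have hhi : α (m + m + n) < α 2 := by rw [hper]; linarith
    have := hα.lt_iff_lt.mp hlo
    have := hα.lt_iff_lt.mp hhi
    omega
  · have := hsep (hg (j - 1)).2 h (by omega)
    have := hsep h' (hg (j + 1)).1 le_rfl
    omega

lemma exists_add_int_mul_two_pi_mem_Ioo {a b c : ℝ} (hab : a < b)
    (hca : 0 < sin (c - a)) (hbc : 0 < sin (b - c)) :
    ∃ z : ℤ, c + z * (2 * π) ∈ Set.Ioo a b := by
  obtain ⟨hlo, hhi⟩ := toIocMod_mem_Ioc two_pi_pos a c
  rw [← self_sub_toIocDiv_zsmul, zsmul_eq_mul, sub_eq_add_neg, ← neg_mul,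
    ← Int.cast_neg] at hlo hhi
  set c' := c + ((-toIocDiv two_pi_pos a c : ℤ) : ℝ) * (2 * π)
  have hlt_pi : c' - a < π := by
    by_contra! h
    have := sin_nonneg_of_nonneg_of_le_pi (sub_nonneg.mpr h) (by linarith)
    rw [sin_sub_pi, add_sub_right_comm, sin_add_int_mul_two_pi] at this
    linarith
  refine ⟨_, hlo, ?_⟩
  by_contra! h
  have := sin_nonpos_of_nonpos_of_neg_pi_le (sub_nonpos.mpr h) (by linarith)
  rw [sub_add_eq_sub_sub, sin_sub_int_mul_two_pi] at this
  linarith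

lemma mul_sin_sub_eq_of_smul_eq_smul_add_smul {a b c ρ s t : ℝ}
    (h : ρ • (cos c, sin c) = s • (cos a, sin a) + t • (cos b, sin b)) :
    ρ * sin (c - a) = t * sin (b - a) ∧ ρ * sin (b - c) = s * sin (b - a) := by
  simp only [Prod.smul_mk, Prod.mk_add_mk, Prod.mk.injEq, smul_eq_mul] at h
  simp only [sin_sub]
  exact ⟨by linear_combination cos a * h.2 - sin a * h.1,
    by linear_combination sin b * h.1 - cos b * h.2⟩

lemma exists_add_int_mul_two_pi_mem_Ioo_of_smul_eq {a b c ρ s t : ℝ} (hab : a < b)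
    (hba : b < a + 2 * π) (hπ : b ≠ a + π) (hρ : 0 < ρ) (hs : 0 < s) (ht : 0 < t)
    (h : ρ • (cos c, sin c) = s • (cos a, sin a) + t • (cos b, sin b)) :
    ∃ z : ℤ, c + z * (2 * π) ∈ Set.Ioo a b ∨ c + π + z * (2 * π) ∈ Set.Ioo a b := by
  obtain ⟨hca, hbc⟩ := mul_sin_sub_eq_of_smul_eq_smul_add_smul h
  have hsin : sin (b - a) ≠ 0 := by
    rw [← neg_ne_zero, ← sin_sub_pi, Ne,
      sin_eq_zero_iff_of_lt_of_lt (by linarith) (by linarith)]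
    contrapose! hπ
    linarith
  rcases hsin.lt_or_gt with hneg | hpos
  · obtain ⟨z, hz⟩ : ∃ z : ℤ, c + π + z * (2 * π) ∈ Set.Ioo a b := by
      refine exists_add_int_mul_two_pi_mem_Ioo hab ?_ ?_
      · rw [add_sub_right_comm, sin_add_pi, neg_pos]
        exact neg_of_mul_neg_right (hca ▸ mul_neg_of_pos_of_neg ht hneg) hρ.le
      · rw [← sub_sub, sin_sub_pi, neg_pos]
        exact neg_of_mul_neg_right (hbc ▸ mul_neg_of_pos_of_neg hs hneg) hρ.le
    exact ⟨z, Or.inr hz⟩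
  · obtain ⟨z, hz⟩ := exists_add_int_mul_two_pi_mem_Ioo hab
      (pos_of_mul_pos_right (hca ▸ mul_pos ht hpos) hρ.le)
      (pos_of_mul_pos_right (hbc ▸ mul_pos hs hpos) hρ.le)
    exact ⟨z, Or.inl hz⟩

lemma StrictMono.exists_antipode_mem_gap {α : ℤ → ℝ} (hα : StrictMono α) {n : ℤ}
    (hn : 1 < n) (hper : ∀ j z : ℤ, α (j + z * n) = α j + z * (2 * π)) {j k : ℤ}
    (hπ : α (j + 1) ≠ α j + π) {ρ s t : ℝ} (hρ : 0 < ρ) (hs : 0 < s) (ht : 0 < t)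
    (h : -(ρ • (cos (α k), sin (α k))) =
      s • (cos (α j), sin (α j)) + t • (cos (α (j + 1)), sin (α (j + 1)))) :
    ∃ z : ℤ, α (k + z * n) + π ∈ Set.Ioo (α j) (α (j + 1)) := by
  have hba : α (j + 1) < α j + 2 * π := by
    have h1 := hper j 1
    rw [one_mul, Int.cast_one, one_mul] at h1
    exact h1 ▸ hα (by omega)
  rw [← smul_neg, Prod.neg_mk, ← cos_add_pi, ← sin_add_pi] at h
  obtain ⟨z, hz | hz⟩ :=
    exists_add_int_mul_two_pi_mem_Ioo_of_smul_eq (hα (lt_add_one j)) hba hπ hρ hs ht h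
  · exact ⟨z, by rwa [hper, add_right_comm]⟩
  · rw [show α k + π + π + z * (2 * π) = α (k + (z + 1) * n) by rw [hper]; push_cast; ring]
      at hz
    have := hα.lt_iff_lt.mp hz.1
    have := hα.lt_iff_lt.mp hz.2
    omega

-- The lifted index `j : ℤ` stands for the point `p i` with `j ≡ i - 1 (mod n)`.
def cyclicIndex (n : ℕ) (j : ℤ) : ℕ := (j % n).toNat + 1

noncomputable def liftAngle (n : ℕ) (θ : ℕ → ℝ) (j : ℤ) : ℝ :=
  θ (cyclicIndex n j) + (j / n : ℤ) * (2 * π)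

section Lift

variable {n : ℕ} {θ : ℕ → ℝ}

lemma cyclicIndex_mem_Icc (hn : 0 < n) (j : ℤ) : cyclicIndex n j ∈ Finset.Icc 1 n := by
  have := Int.emod_lt_of_pos j (Int.natCast_pos.mpr hn)
  rw [cyclicIndex, Finset.mem_Icc]
  omega

lemma cyclicIndex_add_mul (j z : ℤ) : cyclicIndex n (j + z * n) = cyclicIndex n j := by
  rw [cyclicIndex, Int.add_mul_emod_self_right, cyclicIndex]

lemma liftAngle_add_mul (hn : 0 < n) (j z : ℤ) :
    liftAngle n θ (j + z * n) = liftAngle n θ j + z * (2 * π) := by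
  rw [liftAngle, liftAngle, cyclicIndex_add_mul, Int.add_mul_ediv_right _ _ (by omega)]
  push_cast
  ring

lemma cyclicIndex_sub_one {i : ℕ} (hi : i ∈ Finset.Icc 1 n) : cyclicIndex n (i - 1) = i := by
  rw [Finset.mem_Icc] at hi
  rw [cyclicIndex, Int.emod_eq_of_lt (by omega) (by omega)]
  omega

lemma liftAngle_sub_one {i : ℕ} (hi : i ∈ Finset.Icc 1 n) : liftAngle n θ (i - 1) = θ i := by
  rw [Finset.mem_Icc] at hi
  rw [liftAngle, cyclicIndex_sub_one (Finset.mem_Icc.mpr hi),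
    Int.ediv_eq_zero_of_lt (by omega) (by omega)]
  simp

lemma eq_cyclicIndex_sub_one_add_mul (hn : 0 < n) (j : ℤ) :
    j = (cyclicIndex n j - 1 : ℤ) + j / n * n := by
  have := Int.emod_nonneg j (Int.natCast_ne_zero.mpr hn.ne')
  have := Int.emod_add_ediv_mul j n
  rw [cyclicIndex]
  omega

lemma cyclicIndex_add_one (hn : 0 < n) (j : ℤ) :
    cyclicIndex n (j + 1) = if cyclicIndex n j = n then 1 else cyclicIndex n j + 1 := by
  have hi := cyclicIndex_mem_Icc hn j
  rw [eq_cyclicIndex_sub_one_add_mul hn j, add_right_comm, cyclicIndex_add_mul,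
    cyclicIndex_add_mul, cyclicIndex_sub_one hi, sub_add_cancel]
  split_ifs with h
  · rw [h, ← zero_add (n : ℤ), ← one_mul (n : ℤ), cyclicIndex_add_mul]; rfl
  · rw [Finset.mem_Icc] at hi
    have := cyclicIndex_sub_one (n := n) (i := cyclicIndex n j + 1) (by simp; omega)
    push_cast at this
    rwa [add_sub_cancel_right] at this

lemma strictMono_liftAngle (hn : 0 < n) (hmono : StrictMonoOn θ (Set.Icc 1 n))
    (hspan : θ n < θ 1 + 2 * π) : StrictMono (liftAngle n θ) := by
  refine strictMono_int_of_lt_succ fun j => ?_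
  have hi := cyclicIndex_mem_Icc hn j
  rw [eq_cyclicIndex_sub_one_add_mul hn j, add_right_comm, liftAngle_add_mul hn,
    liftAngle_add_mul hn, liftAngle_sub_one hi, sub_add_cancel, add_lt_add_iff_right]
  rw [Finset.mem_Icc] at hi
  rcases hi.2.lt_or_eq with hlt | heq
  · have := liftAngle_sub_one (θ := θ) (i := cyclicIndex n j + 1) (by simp; omega)
    push_cast at this
    rw [add_sub_cancel_right] at this
    rw [this]
    exact hmono ⟨hi.1, hi.2⟩ ⟨by omega, hlt⟩ (lt_add_one _)
  · rw [heq, ← zero_add (n : ℤ), ← one_mul (n : ℤ), liftAngle_add_mul hn]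
    have := liftAngle_sub_one (θ := θ) (Finset.mem_Icc.mpr ⟨le_rfl, hn⟩)
    rw [Nat.cast_one, sub_self] at this
    rw [this]
    simpa using hspan

end Lift

section Configuration

variable {n : ℕ} {p : ℕ → ℝ × ℝ} {θ r : ℕ → ℝ}

lemma sub_ne_smul_sub_of_notMem_segment {E : Type*} [AddCommGroup E] [Module ℝ E] {x y z : E}
    (h : x ∉ segment ℝ y z) {t : ℝ} (ht : 0 ≤ t) : x - y ≠ t • (z - x) :=
  fun heq => h (mem_segment_iff_sameRay.mpr (heq ▸ SameRay.sameRay_nonneg_smul_left _ ht))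

lemma sub_eq_smul_liftAngle (hn : 0 < n)
    (hccw : ∀ i ∈ Finset.Icc 1 n, 0 < r i ∧ p i - p 0 = r i • (cos (θ i), sin (θ i)))
    (j : ℤ) :
    p (cyclicIndex n j) - p 0 =
      r (cyclicIndex n j) • (cos (liftAngle n θ j), sin (liftAngle n θ j)) := by
  rw [(hccw _ (cyclicIndex_mem_Icc hn j)).2, liftAngle, cos_add_int_mul_two_pi,
    sin_add_int_mul_two_pi]

lemma liftAngle_ne_add_pi (hn : 0 < n)
    (hccw : ∀ i ∈ Finset.Icc 1 n, 0 < r i ∧ p i - p 0 = r i • (cos (θ i), sin (θ i)))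
    (hray : ∀ a ∈ Finset.Icc 1 n, ∀ b ∈ Finset.Icc 1 n, ∀ t : ℝ, 0 ≤ t →
      p 0 - p a ≠ t • (p b - p 0)) (j k : ℤ) :
    liftAngle n θ j ≠ liftAngle n θ k + π := by
  intro h
  have hj := cyclicIndex_mem_Icc hn j
  have hk := cyclicIndex_mem_Icc hn k
  refine hray _ hk _ hj (r (cyclicIndex n k) / r (cyclicIndex n j))
    (div_nonneg (hccw _ hk).1.le (hccw _ hj).1.le) ?_
  rw [← neg_sub, sub_eq_smul_liftAngle hn hccw, sub_eq_smul_liftAngle hn hccw, h, cos_add_pi,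
    sin_add_pi, smul_smul, div_mul_cancel₀ _ (hccw _ hj).1.ne', ← smul_neg, Prod.neg_mk]

lemma exists_liftAngle_antipode_mem_gap (hn : 1 < n)
    (hccw : ∀ i ∈ Finset.Icc 1 n, 0 < r i ∧ p i - p 0 = r i • (cos (θ i), sin (θ i)))
    (hmono : StrictMonoOn θ (Set.Icc 1 n)) (hspan : θ n < θ 1 + 2 * π)
    (hray : ∀ a ∈ Finset.Icc 1 n, ∀ b ∈ Finset.Icc 1 n, ∀ t : ℝ, 0 ≤ t →
      p 0 - p a ≠ t • (p b - p 0))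
    {j : ℤ} {k : ℕ} (hk : k ∈ Finset.Icc 1 n) {s t : ℝ} (hs : 0 < s) (ht : 0 < t)
    (h : p 0 - p k =
      s • (p (cyclicIndex n j) - p 0) + t • (p (cyclicIndex n (j + 1)) - p 0)) :
    ∃ z : ℤ, liftAngle n θ (k - 1 + z * n) + π ∈
      Set.Ioo (liftAngle n θ j) (liftAngle n θ (j + 1)) := by
  have hn₀ : 0 < n := by omega
  have hr : ∀ j, 0 < r (cyclicIndex n j) := fun j => (hccw _ (cyclicIndex_mem_Icc hn₀ j)).1
  rw [← neg_sub, ← cyclicIndex_sub_one hk, sub_eq_smul_liftAngle hn₀ hccw,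
    sub_eq_smul_liftAngle hn₀ hccw, sub_eq_smul_liftAngle hn₀ hccw, smul_smul, smul_smul] at h
  exact (strictMono_liftAngle hn₀ hmono hspan).exists_antipode_mem_gap (by omega)
    (liftAngle_add_mul hn₀) (liftAngle_ne_add_pi hn₀ hccw hray _ _) (hr _) (mul_pos hs (hr _))
    (mul_pos ht (hr _)) h

lemma exists_liftAngle_mem_gap (hn : 1 < n)
    (hangle : ∀ i ∈ Finset.Icc 1 n, ∀ j ∈ Finset.Icc 1 n, i ≠ j →
      ∃ k ∈ Finset.Icc 1 n, ∃ s t : ℝ, 0 ≤ s ∧ 0 ≤ t ∧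
        p 0 - p k = s • (p i - p 0) + t • (p j - p 0))
    (hccw : ∀ i ∈ Finset.Icc 1 n, 0 < r i ∧ p i - p 0 = r i • (cos (θ i), sin (θ i)))
    (hmono : StrictMonoOn θ (Set.Icc 1 n)) (hspan : θ n < θ 1 + 2 * π)
    (hray : ∀ a ∈ Finset.Icc 1 n, ∀ b ∈ Finset.Icc 1 n, ∀ t : ℝ, 0 ≤ t →
      p 0 - p a ≠ t • (p b - p 0)) (j : ℤ) :
    ∃ k, liftAngle n θ j < liftAngle n θ k + π ∧
      liftAngle n θ k + π < liftAngle n θ (j + 1) := by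
  have hn₀ : 0 < n := by omega
  have hj := cyclicIndex_mem_Icc hn₀ j
  have hne : cyclicIndex n j ≠ cyclicIndex n (j + 1) := by
    rw [cyclicIndex_add_one hn₀]
    split_ifs <;> omega
  obtain ⟨k, hk, s, t, hs, ht, h⟩ := hangle _ hj _ (cyclicIndex_mem_Icc hn₀ _) hne
  have hs' : 0 < s := hs.lt_of_ne' fun hs₀ =>
    hray k hk _ (cyclicIndex_mem_Icc hn₀ _) t ht (by simpa [hs₀] using h)
  have ht' : 0 < t := ht.lt_of_ne' fun ht₀ => hray k hk _ hj s hs (by simpa [ht₀] using h)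
  obtain ⟨z, hz⟩ := exists_liftAngle_antipode_mem_gap hn hccw hmono hspan hray hk hs' ht' h
  exact ⟨_, hz⟩

end Configuration

/-- Under the hypotheses of Theorem B, if moreover `p 0` lies on no segment
`[p i, p j]`, then `n` is odd, and, with `p 1, …, p n` ordered counterclockwise
around `p 0` (encoded by polar angles `θ` strictly increasing with total span
less than `2π`), a ray opposite `p₀pₖ` contained in the open angle
`∠ pᵢ p₀ p_{i+1}` satisfies `k ≡ i + (n+1)/2 (mod n)`. -/
theorem fermat_toricelli_angle_structure (n : ℕ) (hn : 1 ≤ n) (p : ℕ → ℝ × ℝ)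
    (hdist : ∀ i ∈ Finset.Icc 0 n, ∀ j ∈ Finset.Icc 0 n, i ≠ j → p i ≠ p j)
    (hangle : ∀ i ∈ Finset.Icc 1 n, ∀ j ∈ Finset.Icc 1 n, i ≠ j →
      ∃ k ∈ Finset.Icc 1 n, ∃ s t : ℝ, 0 ≤ s ∧ 0 ≤ t ∧
        p 0 - p k = s • (p i - p 0) + t • (p j - p 0))
    (hseg : ∀ i ∈ Finset.Icc 1 n, ∀ j ∈ Finset.Icc 1 n, i ≠ j →
      p 0 ∉ segment ℝ (p i) (p j))
    (θ r : ℕ → ℝ)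
    (hccw : ∀ i ∈ Finset.Icc 1 n, 0 < r i ∧
      p i - p 0 = r i • (Real.cos (θ i), Real.sin (θ i)))
    (hmono : StrictMonoOn θ (Set.Icc 1 n))
    (hspan : θ n < θ 1 + 2 * Real.pi) :
    Odd n ∧
      ∀ i ∈ Finset.Icc 1 n, ∀ k ∈ Finset.Icc 1 n,
        (∃ s t : ℝ, 0 < s ∧ 0 < t ∧
          p 0 - p k = s • (p i - p 0) + t • (p (if i = n then 1 else i + 1) - p 0)) →
        k % n = (i + (n + 1) / 2) % n := by
  obtain rfl | hn := hn.eq_or_lt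
  · exact ⟨odd_one, fun _ _ _ _ _ => by rw [Nat.mod_one, Nat.mod_one]⟩
  have hn₀ : 0 < n := by omega
  have hray : ∀ a ∈ Finset.Icc 1 n, ∀ b ∈ Finset.Icc 1 n, ∀ t : ℝ, 0 ≤ t →
      p 0 - p a ≠ t • (p b - p 0) := by
    intro a ha b hb t ht
    refine sub_ne_smul_sub_of_notMem_segment ?_ ht
    obtain rfl | hab := eq_or_ne a b
    · rw [Finset.mem_Icc] at ha
      rw [segment_same, Set.mem_singleton_iff]
      exact hdist 0 (by simp) a (by simp; omega) (by omega)
    · exact hseg a ha b hb hab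
  obtain ⟨m, hm, huniq⟩ := exists_shift_of_forall_translate_mem_gap
    (strictMono_liftAngle hn₀ hmono hspan) (Int.natCast_pos.mpr hn₀)
    (fun j => by simpa using liftAngle_add_mul (θ := θ) hn₀ j 1)
    (exists_liftAngle_mem_gap hn hangle hccw hmono hspan hray)
  refine ⟨⟨(-m).toNat, by omega⟩, ?_⟩
  rintro i hi k hk ⟨s, t, hs, ht, h⟩
  have h' : p 0 - p k = s • (p (cyclicIndex n (i - 1)) - p 0) +
      t • (p (cyclicIndex n (i - 1 + 1)) - p 0) := by
    rwa [cyclicIndex_add_one hn₀, cyclicIndex_sub_one hi]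
  obtain ⟨z, hz⟩ := exists_liftAngle_antipode_mem_gap hn hccw hmono hspan hray hk hs ht h'
  have hkz := huniq _ _ hz.1 hz.2
  have hhalf : (((n + 1) / 2 : ℕ) : ℤ) = n + m := by omega
  refine Nat.modEq_iff_dvd.mpr ⟨1 + z, ?_⟩
  rw [Nat.cast_add]
  linear_combination hhalf - hkz
end

section
/- Let p₀, p₁, …, p_n be distinct points in a finite-dimensional normed space X. Then p₀ is a Fermat-Toricelli point of {p₀, p₁, …, p_n} (i.e. minimizes x ↦ ∑_{i=0}^n ‖x − p_i‖) if and only if for each 1 ≤ i ≤ n there is a norming functional φ_i of p_i − p₀ such that ‖∑_{i=1}^n φ_i‖ ≤ 1. -/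
/-!
If the `φ i` norm `p i - p 0` and `‖∑ φ i‖ ≤ 1`, then for every `x`,
`∑ ‖p 0 - p i‖ = ∑ φ i (p i - x) + (∑ φ i) (x - p 0) ≤ ∑ ‖x - p i‖ + ‖x - p 0‖`.

Conversely, minimality of `p 0` says that the one-sided directional derivatives
`u ↦ D(p 0 - p i; u)` of the norm (`i = 0, …, n`) have nonnegative sum. Each of them is
sublinear, so Hahn–Banach on the product space, applied to the zero functional on the diagonal,
writes `0 = ∑ g i` with linear `g i ≤ D(p 0 - p i; ·)`. Since `D(v; ·) ≤ ‖·‖` and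
`D(v; -v) = -‖v‖`, each `g i` has norm at most `1` and norms `p 0 - p i`; then `φ i := -g i`
works, as `∑_{i ≥ 1} φ i = g 0`.
-/

open Filter Topology Finset

section NormDirDeriv

variable {E : Type*} [SeminormedAddCommGroup E] [NormedSpace ℝ E]

noncomputable def normSlope (v u : E) (t : ℝ) : ℝ := (‖v + t • u‖ - ‖v‖) / t

noncomputable def normDirDeriv (v u : E) : ℝ := sInf (normSlope v u '' Set.Ioi 0)

theorem neg_norm_le_normSlope (v u : E) {t : ℝ} (ht : 0 < t) : -‖u‖ ≤ normSlope v u t := by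
  rw [normSlope, le_div_iff₀ ht]
  have := norm_sub_norm_le v (v + t • u)
  simp only [sub_add_cancel_left, norm_neg, norm_smul, Real.norm_of_nonneg ht.le] at this
  linarith

theorem normSlope_le_norm (v u : E) {t : ℝ} (ht : 0 < t) : normSlope v u t ≤ ‖u‖ := by
  rw [normSlope, div_le_iff₀ ht]
  have := norm_add_le v (t • u)
  rw [norm_smul, Real.norm_of_nonneg ht.le] at this
  linarith

theorem convexOn_norm_add_smul (v u : E) : ConvexOn ℝ Set.univ fun t : ℝ => ‖v + t • u‖ := by
  refine ⟨convex_univ, fun x _ y _ a b ha hb hab => ?_⟩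
  calc ‖v + (a • x + b • y) • u‖ = ‖a • (v + x • u) + b • (v + y • u)‖ := by
        congr 1
        linear_combination (norm := module) -(hab • v)
    _ ≤ a • ‖v + x • u‖ + b • ‖v + y • u‖ := convexOn_univ_norm.2 trivial trivial ha hb hab

theorem monotoneOn_normSlope (v u : E) : MonotoneOn (normSlope v u) (Set.Ioi 0) := by
  intro s hs t ht hst
  simpa [normSlope] using (convexOn_norm_add_smul v u).secant_mono (a := 0) trivial trivial
    trivial (ne_of_gt hs) (ne_of_gt ht) hst

theorem bddBelow_normSlope (v u : E) : BddBelow (normSlope v u '' Set.Ioi 0) :=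
  ⟨-‖u‖, by rintro _ ⟨t, ht, rfl⟩; exact neg_norm_le_normSlope v u ht⟩

theorem tendsto_normSlope (v u : E) :
    Tendsto (normSlope v u) (𝓝[>] 0) (𝓝 (normDirDeriv v u)) :=
  (monotoneOn_normSlope v u).tendsto_nhdsGT (bddBelow_normSlope v u)

theorem normDirDeriv_le_normSlope (v u : E) {t : ℝ} (ht : 0 < t) :
    normDirDeriv v u ≤ normSlope v u t :=
  csInf_le (bddBelow_normSlope v u) ⟨t, ht, rfl⟩

theorem normDirDeriv_le_norm (v u : E) : normDirDeriv v u ≤ ‖u‖ :=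
  (normDirDeriv_le_normSlope v u one_pos).trans (normSlope_le_norm v u one_pos)

theorem normDirDeriv_neg_self_le (v : E) : normDirDeriv v (-v) ≤ -‖v‖ :=
  (normDirDeriv_le_normSlope v (-v) one_pos).trans_eq (by simp [normSlope])

theorem normDirDeriv_smul (v u : E) {c : ℝ} (hc : 0 < c) :
    normDirDeriv v (c • u) = c * normDirDeriv v u := by
  have hlim : Tendsto (fun t => c * normSlope v u (c * t)) (𝓝[>] 0) (𝓝 (c * normDirDeriv v u)) :=
    ((tendsto_normSlope v u).comp
      (tendsto_iff_comap.2 (comap_mulLeft_nhdsGT_zero hc).ge)).const_mul c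
  refine tendsto_nhds_unique ((tendsto_normSlope v (c • u)).congr' ?_) hlim
  filter_upwards [self_mem_nhdsWithin] with t ht
  simp only [normSlope, smul_smul, mul_comm t c]
  field_simp

theorem normDirDeriv_add (v u w : E) :
    normDirDeriv v (u + w) ≤ normDirDeriv v u + normDirDeriv v w := by
  have hlim := ((tendsto_normSlope v u).add (tendsto_normSlope v w)).comp
    (tendsto_iff_comap.2 (comap_mulLeft_nhdsGT_zero two_pos).ge)
  refine ge_of_tendsto hlim ?_
  filter_upwards [self_mem_nhdsWithin] with t (ht : 0 < t)
  refine (normDirDeriv_le_normSlope v _ ht).trans ?_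
  have hsplit : (2 : ℝ) • (v + t • (u + w)) = (v + (2 * t) • u) + (v + (2 * t) • w) := by
    module
  have h2 := norm_add_le (v + (2 * t) • u) (v + (2 * t) • w)
  rw [← hsplit, norm_smul, Real.norm_two] at h2
  simp only [Function.comp, normSlope, ← add_div]
  rw [div_le_div_iff₀ ht (by positivity)]
  nlinarith

end NormDirDeriv

section SublinearSum

variable {ι E : Type*} [AddCommGroup E] [Module ℝ E]

theorem exists_linear_le_of_sum_sublinear_nonneg (s : Finset ι) (N : ι → E → ℝ)
    (N_hom : ∀ i ∈ s, ∀ c : ℝ, 0 < c → ∀ x, N i (c • x) = c * N i x)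
    (N_add : ∀ i ∈ s, ∀ x y, N i (x + y) ≤ N i x + N i y)
    (hN : ∀ x, 0 ≤ ∑ i ∈ s, N i x) :
    ∃ g : ι → E →ₗ[ℝ] ℝ, (∀ i ∈ s, ∀ x, g i x ≤ N i x) ∧ (∀ i ∉ s, g i = 0) ∧
      ∀ x, ∑ i ∈ s, g i x = 0 := by
  classical
  have N_zero : ∀ i ∈ s, N i 0 = 0 := fun i hi => by
    have h := N_hom i hi 2 two_pos 0
    rw [smul_zero] at h
    linarith
  let M : (ι → E) → ℝ := fun w => ∑ i ∈ s, N i (w i)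
  have hM_zero : ∀ w : ι → E, (∀ i ∈ s, w i = 0) → M w = 0 := fun w hw =>
    sum_eq_zero fun i hi => by rw [hw i hi, N_zero i hi]
  let diag : Submodule ℝ (ι → E) := LinearMap.range (LinearMap.pi fun _ => LinearMap.id)
  obtain ⟨G, hG_diag, hG_le⟩ := exists_extension_of_le_sublinear ⟨diag, 0⟩ M
    (fun c hc w => by simp only [M, mul_sum]; exact sum_congr rfl fun i hi => N_hom i hi c hc _)
    (fun w w' => by simp only [M, ← sum_add_distrib]; exact sum_le_sum fun i hi => N_add i hi _ _)
    (by rintro ⟨_, u, rfl⟩; exact hN u)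
  have hG_const : ∀ x : E, G (fun _ => x) = 0 := fun x => hG_diag ⟨_, x, rfl⟩
  have hG_zero : ∀ w : ι → E, (∀ i ∈ s, w i = 0) → G w = 0 := fun w hw => by
    have h₁ := (hG_le w).trans_eq (hM_zero w hw)
    have h₂ := (hG_le (-w)).trans_eq (hM_zero (-w) fun i hi => by simp [hw i hi])
    rw [map_neg] at h₂
    linarith
  refine ⟨fun i => G ∘ₗ LinearMap.single ℝ (fun _ => E) i, fun i hi x => ?_, fun i hi => ?_,
    fun x => ?_⟩
  · refine (hG_le _).trans_eq ?_
    refine (sum_eq_single_of_mem i hi fun j hj hji => ?_).trans (by simp)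
    simp [Pi.single_eq_of_ne hji, N_zero j hj]
  · ext x
    exact hG_zero _ fun j hj => by simp [ne_of_mem_of_not_mem hj hi]
  · have hdiff : ∀ j ∈ s, (∑ i ∈ s, Pi.single i x - fun _ => x : ι → E) j = 0 := fun j hj => by
      simp [Finset.sum_apply, Pi.single_apply, hj]
    simpa [← map_sum, hG_const] using hG_zero _ hdiff

end SublinearSum

section Norming

variable {E : Type*} [SeminormedAddCommGroup E] [NormedSpace ℝ E]

theorem sum_normDirDeriv_nonneg_of_forall_sum_norm_le {ι : Type*} (s : Finset ι) (a : ι → E)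
    {x₀ : E} (hmin : ∀ x, ∑ i ∈ s, ‖x₀ - a i‖ ≤ ∑ i ∈ s, ‖x - a i‖) (u : E) :
    0 ≤ ∑ i ∈ s, normDirDeriv (x₀ - a i) u := by
  refine ge_of_tendsto (tendsto_finsetSum s fun i _ => tendsto_normSlope (x₀ - a i) u) ?_
  filter_upwards [self_mem_nhdsWithin] with t (ht : 0 < t)
  have h := hmin (x₀ + t • u)
  simp only [normSlope, ← sum_div, sum_sub_distrib]
  refine div_nonneg ?_ ht.le
  simpa [sub_add_eq_add_sub] using h

theorem norm_apply_le_of_le_norm {g : E →ₗ[ℝ] ℝ} (hg : ∀ u, g u ≤ ‖u‖) (u : E) :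
    ‖g u‖ ≤ ‖u‖ := by
  have := hg (-u)
  rw [map_neg, norm_neg] at this
  exact abs_le.2 ⟨by linarith, hg u⟩

theorem apply_eq_norm_of_le_normDirDeriv {g : E →ₗ[ℝ] ℝ} {v : E}
    (hg : ∀ u, g u ≤ normDirDeriv v u) : g v = ‖v‖ := by
  have := (hg (-v)).trans (normDirDeriv_neg_self_le v)
  rw [map_neg] at this
  exact le_antisymm ((hg v).trans (normDirDeriv_le_norm v v)) (by linarith)

theorem exists_norming_sum_eq_zero_of_forall_sum_norm_le {ι : Type*} (s : Finset ι) (a : ι → E)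
    {x₀ : E} (hmin : ∀ x, ∑ i ∈ s, ‖x₀ - a i‖ ≤ ∑ i ∈ s, ‖x - a i‖) :
    ∃ g : ι → E →L[ℝ] ℝ,
      (∀ i ∈ s, ‖g i‖ ≤ 1 ∧ g i (x₀ - a i) = ‖x₀ - a i‖) ∧ ∑ i ∈ s, g i = 0 := by
  obtain ⟨g, hg_le, hg_zero, hg_sum⟩ := exists_linear_le_of_sum_sublinear_nonneg s
    (fun i => normDirDeriv (x₀ - a i)) (fun i _ _ hc u => normDirDeriv_smul _ u hc)
    (fun i _ => normDirDeriv_add _) (sum_normDirDeriv_nonneg_of_forall_sum_norm_le s a hmin)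
  have hbound : ∀ i u, ‖g i u‖ ≤ 1 * ‖u‖ := fun i u => by
    rw [one_mul]
    by_cases hi : i ∈ s
    · exact norm_apply_le_of_le_norm (fun u => (hg_le i hi u).trans (normDirDeriv_le_norm _ u)) u
    · simp [hg_zero i hi]
  refine ⟨fun i => (g i).mkContinuous 1 (hbound i), fun i hi =>
    ⟨LinearMap.mkContinuous_norm_le _ zero_le_one _, apply_eq_norm_of_le_normDirDeriv (hg_le i hi)⟩,
    ?_⟩
  ext u
  simpa using hg_sum u

theorem sum_norm_sub_le_of_norming {ι : Type*} (s : Finset ι) (a : ι → E) (x₀ x : E)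
    (φ : ι → E →L[ℝ] ℝ) (hφ : ∀ i ∈ s, ‖φ i‖ ≤ 1 ∧ φ i (a i - x₀) = ‖a i - x₀‖)
    (hsum : ‖∑ i ∈ s, φ i‖ ≤ 1) :
    ∑ i ∈ s, ‖x₀ - a i‖ ≤ ‖x - x₀‖ + ∑ i ∈ s, ‖x - a i‖ := by
  have hterm : ∀ i ∈ s, φ i (a i - x) ≤ ‖x - a i‖ := fun i hi =>
    calc φ i (a i - x) ≤ ‖φ i‖ * ‖a i - x‖ := (Real.le_norm_self _).trans ((φ i).le_opNorm _)
      _ ≤ ‖x - a i‖ := by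
          rw [norm_sub_rev]
          exact mul_le_of_le_one_left (norm_nonneg _) (hφ i hi).1
  have hcenter : (∑ i ∈ s, φ i) (x - x₀) ≤ ‖x - x₀‖ :=
    calc _ ≤ ‖∑ i ∈ s, φ i‖ * ‖x - x₀‖ :=
          (Real.le_norm_self _).trans (ContinuousLinearMap.le_opNorm _ _)
      _ ≤ ‖x - x₀‖ := mul_le_of_le_one_left (norm_nonneg _) hsum
  calc ∑ i ∈ s, ‖x₀ - a i‖ = ∑ i ∈ s, (φ i (a i - x) + φ i (x - x₀)) :=
        sum_congr rfl fun i hi => by rw [← map_add, sub_add_sub_cancel, norm_sub_rev, (hφ i hi).2]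
    _ ≤ ‖x - x₀‖ + ∑ i ∈ s, ‖x - a i‖ := by
        rw [sum_add_distrib, ← _root_.sum_apply, add_comm]
        exact add_le_add hcenter (sum_le_sum hterm)

end Norming

theorem ContinuousLinearMap.norm_eq_one_of_apply_eq_norm {E : Type*} [NormedAddCommGroup E]
    [NormedSpace ℝ E] {φ : E →L[ℝ] ℝ} {v : E} (hv : v ≠ 0) (hφ : ‖φ‖ ≤ 1) (hφv : φ v = ‖v‖) :
    ‖φ‖ = 1 := by
  refine le_antisymm hφ ?_
  simpa [hφv, norm_ne_zero_iff.2 hv] using φ.ratio_le_opNorm v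

theorem fermat_toricelli_char_self_general {X : Type*} [NormedAddCommGroup X] [NormedSpace ℝ X]
    (n : ℕ) (p : ℕ → X)
    (hdist : ∀ i ∈ Finset.Icc 0 n, ∀ j ∈ Finset.Icc 0 n, i ≠ j → p i ≠ p j) :
    (∀ x : X, ∑ i ∈ Finset.Icc 0 n, ‖p 0 - p i‖ ≤ ∑ i ∈ Finset.Icc 0 n, ‖x - p i‖)
      ↔ ∃ φ : ℕ → (X →L[ℝ] ℝ),
          (∀ i ∈ Finset.Icc 1 n, ‖φ i‖ = 1 ∧ φ i (p i - p 0) = ‖p i - p 0‖) ∧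
          ‖∑ i ∈ Finset.Icc 1 n, φ i‖ ≤ 1 := by
  have hIcc : insert 0 (Icc 1 n) = Icc 0 n := insert_Icc_add_one_left_eq_Icc n.zero_le
  have h0 : 0 ∉ Icc 1 n := by simp
  constructor
  · intro hmin
    obtain ⟨g, hg, hg_sum⟩ := exists_norming_sum_eq_zero_of_forall_sum_norm_le _ p hmin
    refine ⟨fun i => -g i, fun i hi => ?_, ?_⟩
    · have hi₀ : i ∈ Icc 0 n := Icc_subset_Icc_left zero_le_one hi
      have hv : p 0 - p i ≠ 0 :=
        sub_ne_zero.2 (hdist 0 (by simp) i hi₀ (ne_of_mem_of_not_mem hi h0).symm)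
      obtain ⟨hg_norm, hg_v⟩ := hg i hi₀
      refine ⟨by rw [norm_neg]; exact (g i).norm_eq_one_of_apply_eq_norm hv hg_norm hg_v, ?_⟩
      rw [neg_apply, ← map_neg, neg_sub, hg_v, norm_sub_rev]
    · rw [← hIcc, sum_insert h0] at hg_sum
      rw [sum_neg_distrib, eq_neg_of_add_eq_zero_right hg_sum, neg_neg]
      exact (hg 0 (by simp)).1
  · rintro ⟨φ, hφ, hsum⟩ x
    have h := sum_norm_sub_le_of_norming (Icc 1 n) p (p 0) x φ
      (fun i hi => ⟨(hφ i hi).1.le, (hφ i hi).2⟩) hsum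
    rw [← hIcc, sum_insert h0, sum_insert h0, sub_self, norm_zero, zero_add]
    exact h

/-- Characterization of Fermat–Toricelli points (second case): `p 0` minimizes
`x ↦ ∑_{i=0}^n ‖x - p i‖` iff each `p i - p 0` (`1 ≤ i ≤ n`) has a norming
functional `φ i` with `‖∑ φ i‖ ≤ 1`. -/
theorem fermat_toricelli_char_self {X : Type*} [NormedAddCommGroup X] [NormedSpace ℝ X]
    [FiniteDimensional ℝ X] (n : ℕ) (hn : 1 ≤ n) (p : ℕ → X)
    (hdist : ∀ i ∈ Finset.Icc 0 n, ∀ j ∈ Finset.Icc 0 n, i ≠ j → p i ≠ p j) :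
    (∀ x : X, ∑ i ∈ Finset.Icc 0 n, ‖p 0 - p i‖ ≤ ∑ i ∈ Finset.Icc 0 n, ‖x - p i‖)
      ↔ ∃ φ : ℕ → (X →L[ℝ] ℝ),
          (∀ i ∈ Finset.Icc 1 n, ‖φ i‖ = 1 ∧ φ i (p i - p 0) = ‖p i - p 0‖) ∧
          ‖∑ i ∈ Finset.Icc 1 n, φ i‖ ≤ 1 :=
  fermat_toricelli_char_self_general n p hdist
end

section
/- Let p₀, p₁, …, p_n be distinct points in a finite-dimensional normed space X. Then p₀ is a Fermat-Toricelli point of {p₁, …, p_n} (i.e. minimizes x ↦ ∑_{i=1}^n ‖x − p_i‖) if and only if for each 1 ≤ i ≤ n there is a norming functional φ_i of p_i − p₀ such that ∑_{i=1}^n φ_i = 0. -/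
/-!
Sufficiency is the estimate `∑ ‖x - pᵢ‖ ≥ ∑ φᵢ (pᵢ - x) = ∑ φᵢ (pᵢ - p₀)`, valid because
`∑ φᵢ = 0`. For necessity, put `q = (pᵢ - p₀)ᵢ` in the `ℓ¹`-sum `Xⁿ`: minimality of `p₀` says
exactly that `q` is at distance `‖q‖` from the diagonal, so Hahn–Banach on the quotient by the
diagonal yields a functional of norm `≤ 1` that vanishes on the diagonal and takes the value `‖q‖`
at `q`. Its restrictions `φᵢ` to the factors then sum to zero, and `∑ φᵢ qᵢ = ∑ ‖qᵢ‖` with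
`φᵢ qᵢ ≤ ‖qᵢ‖` forces `φᵢ qᵢ = ‖qᵢ‖` for each `i`; as `qᵢ ≠ 0`, this gives `‖φᵢ‖ = 1`.
-/

open Finset Metric

section HahnBanach

variable {𝕜 E : Type*} [RCLike 𝕜] [SeminormedAddCommGroup E] [NormedSpace 𝕜 E]

theorem exists_dual_eq_zero_on_of_norm_le_norm_sub (M : Submodule 𝕜 E) {y : E}
    (hy : ∀ m ∈ M, ‖y‖ ≤ ‖y - m‖) :
    ∃ f : StrongDual 𝕜 E, ‖f‖ ≤ 1 ∧ (∀ m ∈ M, f m = 0) ∧ f y = ‖y‖ := by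
  obtain ⟨g, hg, hgy⟩ := exists_dual_vector'' 𝕜 (M.mkQ y)
  have hdist : ‖M.mkQ y‖ = ‖y‖ := by
    refine (QuotientAddGroup.norm_mk y).trans (le_antisymm ?_ ?_)
    · simpa using infDist_le_dist_of_mem (x := y) M.zero_mem
    · exact (le_infDist ⟨0, M.zero_mem⟩).2 fun m hm =>
        (hy m hm).trans_eq (dist_eq_norm y m).symm
  refine ⟨g ∘L M.mkQL, ?_, fun m hm => ?_, ?_⟩
  · refine ContinuousLinearMap.opNorm_le_bound _ zero_le_one fun x => ?_
    calc ‖g (M.mkQ x)‖ ≤ 1 * ‖M.mkQ x‖ := g.le_of_opNorm_le hg _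
      _ ≤ 1 * ‖x‖ := by gcongr; exact Submodule.Quotient.norm_mk_le M x
  · simp [(Submodule.Quotient.mk_eq_zero M).2 hm]
  · rw [ContinuousLinearMap.comp_apply, Submodule.mkQL_apply, hgy, hdist]

end HahnBanach

namespace PiLp

variable {𝕜 ι : Type*} [RCLike 𝕜] [DecidableEq ι] {p : ENNReal}
  {β : ι → Type*} [∀ i, SeminormedAddCommGroup (β i)] [∀ i, NormedSpace 𝕜 (β i)]

def dualComponent (Φ : StrongDual 𝕜 (PiLp p β)) (i : ι) : StrongDual 𝕜 (β i) :=
  Φ ∘L (PiLp.continuousLinearEquiv p 𝕜 β).symm.toContinuousLinearMap ∘L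
    ContinuousLinearMap.single 𝕜 β i

theorem dualComponent_apply (Φ : StrongDual 𝕜 (PiLp p β)) (i : ι) (x : β i) :
    dualComponent Φ i x = Φ (PiLp.single p i x) := rfl

variable [Fintype ι]

theorem apply_eq_sum_dualComponent (Φ : StrongDual 𝕜 (PiLp p β)) (y : PiLp p β) :
    Φ y = ∑ i, dualComponent Φ i (y i) := by
  conv_lhs => rw [← WithLp.toLp_ofLp (p := p) y, ← Finset.univ_sum_single (WithLp.ofLp y)]
  simp only [WithLp.toLp_sum, map_sum, PiLp.toLp_single, dualComponent_apply]

theorem norm_dualComponent_le [Fact (1 ≤ p)] (Φ : StrongDual 𝕜 (PiLp p β)) (i : ι) :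
    ‖dualComponent Φ i‖ ≤ ‖Φ‖ :=
  ContinuousLinearMap.opNorm_le_bound _ (norm_nonneg Φ) fun x => by
    simpa only [dualComponent_apply, PiLp.norm_single] using Φ.le_opNorm (PiLp.single p i x)

end PiLp

section FermatTorricelli

variable {X ι : Type*} [SeminormedAddCommGroup X] [NormedSpace ℝ X]

theorem ContinuousLinearMap.apply_le_norm_of_norm_le_one {φ : StrongDual ℝ X} (hφ : ‖φ‖ ≤ 1)
    (x : X) : φ x ≤ ‖x‖ :=
  (Real.le_norm_self _).trans ((φ.le_of_opNorm_le hφ x).trans_eq (one_mul _))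

theorem ContinuousLinearMap.norm_eq_one_of_apply_eq_norm_s12 {φ : StrongDual ℝ X} (hφ : ‖φ‖ ≤ 1)
    {x : X} (hx : ‖x‖ ≠ 0) (h : φ x = ‖x‖) : ‖φ‖ = 1 := by
  refine le_antisymm hφ (one_le_of_le_mul_right₀ (norm_nonneg x |>.lt_of_ne' hx) ?_)
  simpa [h] using φ.le_opNorm x

theorem exists_dual_of_forall_sum_norm_sub_le [Fintype ι] {a : ι → X} {z : X}
    (hz : ∀ x, ∑ i, ‖z - a i‖ ≤ ∑ i, ‖x - a i‖) :
    ∃ φ : ι → StrongDual ℝ X,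
      (∀ i, ‖φ i‖ ≤ 1 ∧ φ i (a i - z) = ‖a i - z‖) ∧ ∑ i, φ i = 0 := by
  classical
  let diag : X →ₗ[ℝ] PiLp 1 (fun _ : ι => X) :=
    (WithLp.linearEquiv 1 ℝ _).symm.toLinearMap ∘ₗ LinearMap.pi fun _ => LinearMap.id
  let q : PiLp 1 (fun _ : ι => X) := WithLp.toLp 1 fun i => a i - z
  have hq : ∀ m ∈ LinearMap.range diag, ‖q‖ ≤ ‖q - m‖ := by
    rintro _ ⟨v, rfl⟩
    simp only [PiLp.norm_eq_of_L1]
    convert hz (z + v) using 2 with i _ i _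
    · exact norm_sub_rev _ _
    · change ‖a i - z - v‖ = _
      rw [← norm_neg]
      abel_nf
  obtain ⟨Φ, hΦ, hΦdiag, hΦq⟩ := exists_dual_eq_zero_on_of_norm_le_norm_sub _ hq
  have hψ : ∀ i, ‖PiLp.dualComponent Φ i‖ ≤ 1 := fun i =>
    (PiLp.norm_dualComponent_le Φ i).trans hΦ
  have hsum : ∑ i, PiLp.dualComponent Φ i (a i - z) = ∑ i, ‖a i - z‖ := by
    rw [← PiLp.norm_eq_of_L1 q]
    exact (PiLp.apply_eq_sum_dualComponent Φ q).symm.trans hΦq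
  refine ⟨PiLp.dualComponent Φ, fun i => ⟨hψ i, ?_⟩, ?_⟩
  · exact (sum_eq_sum_iff_of_le fun i _ =>
      ContinuousLinearMap.apply_le_norm_of_norm_le_one (hψ i) _).1 hsum i (mem_univ i)
  · ext v
    rw [_root_.sum_apply, zero_apply, ← hΦdiag (diag v) ⟨v, rfl⟩,
      PiLp.apply_eq_sum_dualComponent]
    rfl

theorem forall_sum_norm_sub_le_iff_exists_dual {s : Finset ι} {a : ι → X} {z : X} :
    (∀ x, ∑ i ∈ s, ‖z - a i‖ ≤ ∑ i ∈ s, ‖x - a i‖) ↔ ∃ φ : ι → StrongDual ℝ X,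
      (∀ i ∈ s, ‖φ i‖ ≤ 1 ∧ φ i (a i - z) = ‖a i - z‖) ∧ ∑ i ∈ s, φ i = 0 := by
  classical
  constructor
  · intro hz
    obtain ⟨ψ, hψ, hsum⟩ := exists_dual_of_forall_sum_norm_sub_le (a := fun i : s => a i) (z := z)
      fun x => (sum_coe_sort s _).trans_le ((hz x).trans_eq (sum_coe_sort s _).symm)
    refine ⟨fun i => if h : i ∈ s then ψ ⟨i, h⟩ else 0, fun i hi => by simpa [hi] using hψ ⟨i, hi⟩,
      ?_⟩
    rw [← sum_coe_sort]
    simpa using hsum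
  · rintro ⟨φ, hφ, hsum⟩ x
    calc ∑ i ∈ s, ‖z - a i‖ = ∑ i ∈ s, φ i (a i - z) :=
          sum_congr rfl fun i hi => by rw [(hφ i hi).2, norm_sub_rev]
      _ = ∑ i ∈ s, φ i (a i - x) + (∑ i ∈ s, φ i) (x - z) := by
          simp only [_root_.sum_apply, ← sum_add_distrib, ← map_add, sub_add_sub_cancel]
      _ ≤ ∑ i ∈ s, ‖x - a i‖ := by
          rw [hsum, zero_apply, add_zero]
          exact sum_le_sum fun i hi =>
            (ContinuousLinearMap.apply_le_norm_of_norm_le_one (hφ i hi).1 _).trans_eq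
              (norm_sub_rev _ _)

end FermatTorricelli

theorem fermat_toricelli_char_general {X : Type*} [NormedAddCommGroup X] [NormedSpace ℝ X]
    (n : ℕ) (p : ℕ → X)
    (hdist : ∀ i ∈ Finset.Icc 0 n, ∀ j ∈ Finset.Icc 0 n, i ≠ j → p i ≠ p j) :
    (∀ x : X, ∑ i ∈ Finset.Icc 1 n, ‖p 0 - p i‖ ≤ ∑ i ∈ Finset.Icc 1 n, ‖x - p i‖)
      ↔ ∃ φ : ℕ → (X →L[ℝ] ℝ),
          (∀ i ∈ Finset.Icc 1 n, ‖φ i‖ = 1 ∧ φ i (p i - p 0) = ‖p i - p 0‖) ∧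
          ∑ i ∈ Finset.Icc 1 n, φ i = 0 := by
  rw [forall_sum_norm_sub_le_iff_exists_dual]
  refine exists_congr fun φ => and_congr_left fun _ => forall₂_congr fun i hi =>
    and_congr_left fun hφi => ⟨fun hle => ?_, le_of_eq⟩
  rw [Finset.mem_Icc] at hi
  have hne : p i - p 0 ≠ 0 := sub_ne_zero.2 <|
    hdist i (Finset.mem_Icc.2 ⟨Nat.zero_le i, hi.2⟩) 0 (Finset.mem_Icc.2 ⟨le_rfl, Nat.zero_le n⟩)
      (by omega)
  exact ContinuousLinearMap.norm_eq_one_of_apply_eq_norm_s12 hle (norm_ne_zero_iff.2 hne) hφi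

/-- Characterization of Fermat–Toricelli points (first case): `p 0` minimizes
`x ↦ ∑_{i=1}^n ‖x - p i‖` iff each `p i - p 0` (`1 ≤ i ≤ n`) has a norming
functional `φ i` with `∑ φ i = 0`. -/
theorem fermat_toricelli_char {X : Type*} [NormedAddCommGroup X] [NormedSpace ℝ X]
    [FiniteDimensional ℝ X] (n : ℕ) (hn : 1 ≤ n) (p : ℕ → X)
    (hdist : ∀ i ∈ Finset.Icc 0 n, ∀ j ∈ Finset.Icc 0 n, i ≠ j → p i ≠ p j) :
    (∀ x : X, ∑ i ∈ Finset.Icc 1 n, ‖p 0 - p i‖ ≤ ∑ i ∈ Finset.Icc 1 n, ‖x - p i‖)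
      ↔ ∃ φ : ℕ → (X →L[ℝ] ℝ),
          (∀ i ∈ Finset.Icc 1 n, ‖φ i‖ = 1 ∧ φ i (p i - p 0) = ‖p i - p 0‖) ∧
          ∑ i ∈ Finset.Icc 1 n, φ i = 0 :=
  fermat_toricelli_char_general n p hdist
end

section
/- Consider the balancing game in a normed space X with parameter k: starting from p₀ = 0, in each round Player I chooses k unit vectors x₁, …, x_k and Player II chooses signs ε₁, …, ε_k ∈ {±1}, and the position updates to p_i = p_{i−1} + ∑_{j=1}^k ε_j x_j. If X is a normed plane and k is even, Player II has a strategy forcing ‖p_i‖ ≤ 2 for all i. -/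
/-!
Player II answers the `k` vectors of a round two at a time. In a normed plane, if `‖p‖ ≤ 2` and
`x`, `y` are unit vectors, some choice of signs keeps `‖p ± x ± y‖ ≤ 2`: writing `p = α x + β y`
(or `x = ±y`, which is trivial) and reducing by symmetry to `α ≥ β ≥ 0`, the vector `p - (x + y)`
is a combination with nonnegative coefficients of total weight at most one of vectors of norm at
most two, chosen among `p`, `x - y`, `-2 y` and `-(x + y)`.
-/

section Signs

variable {R M : Type*} [Ring R] [AddCommGroup M] [Module R M]

theorem exists_signs_add_sum_mem {S : Set M} {P : M → Prop}
    (hS : ∀ p ∈ S, ∀ x y, P x → P y →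
      ∃ e d : R, (e = 1 ∨ e = -1) ∧ (d = 1 ∨ d = -1) ∧ p + e • x + d • y ∈ S)
    {k : ℕ} (hk : Even k) {w : M} (hw : w ∈ S) (v : Fin k → M) (hv : ∀ j, P (v j)) :
    ∃ ε : Fin k → R, (∀ j, ε j = 1 ∨ ε j = -1) ∧ w + ∑ j, ε j • v j ∈ S := by
  obtain ⟨m, rfl⟩ := hk.two_dvd
  clear hk
  induction m with
  | zero => exact ⟨0, fun j => j.elim0, by simpa using hw⟩
  | succ m ih =>
    revert v
    change ∀ v : Fin (2 * m + 2) → M, (∀ j, P (v j)) →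
      ∃ ε : Fin (2 * m + 2) → R, (∀ j, ε j = 1 ∨ ε j = -1) ∧ w + ∑ j, ε j • v j ∈ S
    intro v hv
    obtain ⟨ε, hε, hεS⟩ := ih (fun j => v (Fin.castAdd 2 j)) fun j => hv _
    obtain ⟨e, d, he, hd, hedS⟩ :=
      hS _ hεS (v (Fin.natAdd (2 * m) 0)) (v (Fin.natAdd (2 * m) 1)) (hv _) (hv _)
    refine ⟨Fin.append ε ![e, d], fun j => ?_, ?_⟩
    · refine Fin.addCases (fun i => ?_) (fun i => ?_) j
      · rw [Fin.append_left]; exact hε i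
      · rw [Fin.append_right]; fin_cases i <;> simpa
    · simpa [Fin.sum_univ_add, add_assoc] using hedS

end Signs

section NormedSpace

variable {E : Type*} [NormedAddCommGroup E] [NormedSpace ℝ E]

theorem norm_le_of_smul_eq_smul_add_smul {a b c r : ℝ} {q y z : E} (hc : 0 < c) (ha : 0 ≤ a)
    (hb : 0 ≤ b) (habc : a + b ≤ c) (hy : ‖y‖ ≤ r) (hz : ‖z‖ ≤ r)
    (h : c • q = a • y + b • z) : ‖q‖ ≤ r := by
  have hr : 0 ≤ r := (norm_nonneg y).trans hy
  refine le_of_mul_le_mul_left ?_ hc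
  calc c * ‖q‖ = ‖a • y + b • z‖ := by rw [← h, norm_smul, Real.norm_of_nonneg hc.le]
    _ ≤ a * ‖y‖ + b * ‖z‖ := by
      grw [norm_add_le, norm_smul, norm_smul, Real.norm_of_nonneg ha, Real.norm_of_nonneg hb]
    _ ≤ a * r + b * r := by gcongr
    _ ≤ c * r := by nlinarith

theorem norm_smul_add_smul_sub_add_le_two {x y : E} {α β : ℝ} (hx : ‖x‖ = 1) (hy : ‖y‖ = 1)
    (hβ : 0 ≤ β) (hβα : β ≤ α) (hp : ‖α • x + β • y‖ ≤ 2) :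
    ‖α • x + β • y - (x + y)‖ ≤ 2 := by
  have hαβ : α - β ≤ 2 := by
    have := norm_sub_le (α • x + β • y) (β • y)
    rw [add_sub_cancel_right, norm_smul, norm_smul, hx, hy, Real.norm_of_nonneg hβ,
      Real.norm_of_nonneg (hβ.trans hβα)] at this
    linarith
  have hxy : ‖x + y‖ ≤ 2 := (norm_add_le x y).trans (by rw [hx, hy]; norm_num)
  have hx_y : ‖x - y‖ ≤ 2 := (norm_sub_le x y).trans (by rw [hx, hy]; norm_num)
  have h2y : ‖(-2 : ℝ) • y‖ ≤ 2 := by rw [norm_smul, hy]; norm_num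
  rcases le_total 2 (α + β) with hsum | hsum
  · exact norm_le_of_smul_eq_smul_add_smul (a := α + β - 2) (b := α - β) (c := α + β)
      (by linarith) (by linarith) (by linarith) (by linarith) hp hx_y (by module)
  rcases le_total α 1 with hα | hα
  · exact norm_le_of_smul_eq_smul_add_smul (a := α - β) (b := 2 - 2 * α) (c := 2)
      (y := (-2 : ℝ) • y) (z := -(x + y))
      two_pos (by linarith) (by linarith) (by linarith) h2y (by rwa [norm_neg]) (by module)
  · exact norm_le_of_smul_eq_smul_add_smul (a := 2 - α - β) (b := 2 * α - 2) (c := 2)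
      (y := (-2 : ℝ) • y) (z := x - y)
      two_pos (by linarith) (by linarith) (by linarith) h2y hx_y (by module)

theorem exists_eq_mul_abs (a : ℝ) : ∃ s : ℝ, (s = 1 ∨ s = -1) ∧ a = s * |a| := by
  rcases le_total 0 a with ha | ha
  · exact ⟨1, Or.inl rfl, by rw [abs_of_nonneg ha, one_mul]⟩
  · exact ⟨-1, Or.inr rfl, by rw [abs_of_nonpos ha]; ring⟩

theorem norm_smul_of_eq_one_or_eq_neg_one {s : ℝ} (hs : s = 1 ∨ s = -1) {x : E}
    (hx : ‖x‖ = 1) : ‖s • x‖ = 1 := by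
  rcases hs with rfl | rfl <;> simpa using hx

theorem exists_signs_norm_smul_add_smul_add_le_two_of_abs_le {x y : E} {α β : ℝ}
    (hx : ‖x‖ = 1) (hy : ‖y‖ = 1) (hβα : |β| ≤ |α|) (hp : ‖α • x + β • y‖ ≤ 2) :
    ∃ e d : ℝ, (e = 1 ∨ e = -1) ∧ (d = 1 ∨ d = -1) ∧ ‖α • x + β • y + e • x + d • y‖ ≤ 2 := by
  obtain ⟨s, hs, hα⟩ := exists_eq_mul_abs α
  obtain ⟨t, ht, hβ⟩ := exists_eq_mul_abs β
  have key := norm_smul_add_smul_sub_add_le_two (norm_smul_of_eq_one_or_eq_neg_one hs hx)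
    (norm_smul_of_eq_one_or_eq_neg_one ht hy) (abs_nonneg β) hβα
    (by rwa [smul_smul, smul_smul, mul_comm |α|, mul_comm |β|, ← hα, ← hβ])
  refine ⟨-s, -t, by rcases hs with rfl | rfl <;> norm_num,
    by rcases ht with rfl | rfl <;> norm_num, ?_⟩
  convert key using 2
  generalize |α| = a at hα
  generalize |β| = b at hβ
  rw [hα, hβ]
  module

theorem exists_signs_norm_smul_add_smul_add_le_two_s15 {x y : E} {α β : ℝ}
    (hx : ‖x‖ = 1) (hy : ‖y‖ = 1) (hp : ‖α • x + β • y‖ ≤ 2) :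
    ∃ e d : ℝ, (e = 1 ∨ e = -1) ∧ (d = 1 ∨ d = -1) ∧ ‖α • x + β • y + e • x + d • y‖ ≤ 2 := by
  rcases le_total |β| |α| with hβα | hαβ
  · exact exists_signs_norm_smul_add_smul_add_le_two_of_abs_le hx hy hβα hp
  · obtain ⟨d, e, hd, he, h⟩ :=
      exists_signs_norm_smul_add_smul_add_le_two_of_abs_le hy hx hαβ (by rwa [add_comm])
    exact ⟨e, d, he, hd, by convert h using 2; abel⟩

theorem exists_signs_norm_add_add_le_two (hdim : Module.finrank ℝ E = 2) {p x y : E}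
    (hp : ‖p‖ ≤ 2) (hx : ‖x‖ = 1) (hy : ‖y‖ = 1) :
    ∃ e d : ℝ, (e = 1 ∨ e = -1) ∧ (d = 1 ∨ d = -1) ∧ ‖p + e • x + d • y‖ ≤ 2 := by
  by_cases hxy : LinearIndependent ℝ ![x, y]
  · have hspan : p ∈ Submodule.span ℝ {x, y} := by
      rw [← Matrix.range_cons_cons_empty, hxy.span_eq_top_of_card_eq_finrank (by simp [hdim])]
      trivial
    obtain ⟨α, β, rfl⟩ := Submodule.mem_span_pair.mp hspan
    exact exists_signs_norm_smul_add_smul_add_le_two_s15 hx hy hp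
  · -- two dependent unit vectors are equal up to sign, so the second cancels the first
    obtain ⟨a, rfl⟩ : ∃ a : ℝ, a • y = x := by
      simpa [linearIndependent_fin2, norm_ne_zero_iff.mp (hy.trans_ne one_ne_zero)] using hxy
    have ha : a = 1 ∨ a = -1 := by
      rw [norm_smul, hy, mul_one, Real.norm_eq_abs] at hx
      exact abs_eq zero_le_one |>.mp hx
    refine ⟨1, -a, Or.inl rfl, by rcases ha with rfl | rfl <;> norm_num, ?_⟩
    simpa [add_assoc] using hp

end NormedSpace

theorem balancing_game_player_two_general {X : Type*} [NormedAddCommGroup X] [NormedSpace ℝ X]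
    (hdim : Module.finrank ℝ X = 2) (k : ℕ) (hke : Even k) :
    ∃ σ : ℕ → X → (Fin k → X) → (Fin k → ℝ),
      (∀ i w v j, σ i w v j = 1 ∨ σ i w v j = -1) ∧
      ∀ xs : ℕ → Fin k → X, (∀ i j, ‖xs i j‖ = 1) →
        ∀ p : ℕ → X, p 0 = 0 →
          (∀ i, p (i + 1) = p i + ∑ j, σ i (p i) (xs i) j • xs i j) →
          ∀ i, ‖p i‖ ≤ 2 := by
  have hround : ∀ (w : X) (v : Fin k → X), ∃ ε : Fin k → ℝ, (∀ j, ε j = 1 ∨ ε j = -1) ∧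
      (‖w‖ ≤ 2 → (∀ j, ‖v j‖ = 1) → ‖w + ∑ j, ε j • v j‖ ≤ 2) := by
    intro w v
    by_cases h : ‖w‖ ≤ 2 ∧ ∀ j, ‖v j‖ = 1
    · obtain ⟨ε, hε, hεw⟩ := exists_signs_add_sum_mem (S := {p : X | ‖p‖ ≤ 2})
        (fun _ hp _ _ hx hy => exists_signs_norm_add_add_le_two hdim hp hx hy) hke h.1 v h.2
      exact ⟨ε, hε, fun _ _ => hεw⟩
    · exact ⟨1, fun _ => Or.inl rfl, fun hw hv => (h ⟨hw, hv⟩).elim⟩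
  choose σ hσ hσw using hround
  refine ⟨fun _ => σ, fun _ => hσ, fun xs hxs p hp0 hp i => ?_⟩
  induction i with
  | zero => simp [hp0]
  | succ i ih => rw [hp i]; exact hσw _ _ ih (hxs i)

/-- In the balancing game in a normed plane with an even number `k` of unit
vectors per round, Player II has a strategy (choosing signs as a function of
the round, the current position and Player I's vectors) keeping every position
within norm 2. -/
theorem balancing_game_player_two {X : Type*} [NormedAddCommGroup X] [NormedSpace ℝ X]
    (hdim : Module.finrank ℝ X = 2) (k : ℕ) (hk : 0 < k) (hke : Even k) :
    ∃ σ : ℕ → X → (Fin k → X) → (Fin k → ℝ),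
      (∀ i w v j, σ i w v j = 1 ∨ σ i w v j = -1) ∧
      ∀ xs : ℕ → Fin k → X, (∀ i j, ‖xs i j‖ = 1) →
        ∀ p : ℕ → X, p 0 = 0 →
          (∀ i, p (i + 1) = p i + ∑ j, σ i (p i) (xs i) j • xs i j) →
          ∀ i, ‖p i‖ ≤ 2 :=
  balancing_game_player_two_general hdim k hke
end

section
/- In the balancing game with parameter k in an inner product space X of dimension ≥ 2, if k is odd then Player I has a strategy (choosing in round i all k unit vectors equal to a unit vector orthogonal to the current position p_{i−1}) forcing ‖p_i‖² ≥ i for all i, so the position sequence is unbounded. -/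
/-!
Against the position `p`, Player I plays `k` copies of a unit vector `e ⟂ p` (one exists since
`dim X ≥ 2`). Whatever the signs, the move is `m • e` with `m` a sum of `k` signs, an odd and hence
nonzero integer, so by Pythagoras each round adds `m² ≥ 1` to `‖p‖²`.
-/

open Finset

theorem exists_norm_eq_one_inner_eq_zero {X : Type*} [NormedAddCommGroup X]
    [InnerProductSpace ℝ X] (hdim : 2 ≤ Module.rank ℝ X) (w : X) :
    ∃ v : X, ‖v‖ = 1 ∧ inner ℝ w v = (0 : ℝ) := by
  have hK : (ℝ ∙ w)ᗮ ≠ ⊥ := by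
    rw [Ne, Submodule.orthogonal_eq_bot_iff]
    intro htop
    have : Module.rank ℝ X ≤ 1 := by
      rw [← rank_top ℝ X, ← htop]
      exact (rank_span_le _).trans (by simp)
    exact absurd (hdim.trans this) (by norm_num)
  obtain ⟨u, hu, hu0⟩ := Submodule.exists_mem_ne_zero_of_ne_bot hK
  refine ⟨‖u‖⁻¹ • u, by simp [norm_smul, hu0], ?_⟩
  rw [real_inner_smul_right,
    Submodule.inner_right_of_mem_orthogonal (Submodule.mem_span_singleton_self w) hu, mul_zero]

theorem sum_signs_eq_card_sub_two_mul {ι : Type*} (s : Finset ι) (ε : ι → ℝ)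
    (hε : ∀ j ∈ s, ε j = 1 ∨ ε j = -1) :
    ∑ j ∈ s, ε j = #s - 2 * #{j ∈ s | ε j = -1} := by
  have hsign : ∀ j ∈ s, ε j = 1 - 2 * if ε j = -1 then 1 else 0 := by
    intro j hj
    rcases hε j hj with h | h <;> norm_num [h]
  rw [sum_congr rfl hsign, sum_sub_distrib, ← mul_sum, sum_boole]
  simp

theorem one_le_sq_sum_signs {ι : Type*} {s : Finset ι} (hs : Odd #s) (ε : ι → ℝ)
    (hε : ∀ j ∈ s, ε j = 1 ∨ ε j = -1) :
    1 ≤ (∑ j ∈ s, ε j) ^ 2 := by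
  have hne : (#s : ℤ) - 2 * #{j ∈ s | ε j = -1} ≠ 0 := by
    intro h
    have : Even (#s : ℤ) := ⟨#{j ∈ s | ε j = -1}, by linarith⟩
    exact (Int.not_even_iff_odd.mpr (by exact_mod_cast hs)) this
  rw [sum_signs_eq_card_sub_two_mul s ε hε]
  exact_mod_cast one_le_sq_iff_one_le_abs _ |>.mpr (Int.one_le_abs hne)

theorem norm_add_smul_sq_of_inner_eq_zero {X : Type*} [NormedAddCommGroup X]
    [InnerProductSpace ℝ X] {p v : X} (hv : ‖v‖ = 1) (hpv : inner ℝ p v = (0 : ℝ)) (c : ℝ) :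
    ‖p + c • v‖ ^ 2 = ‖p‖ ^ 2 + c ^ 2 := by
  rw [norm_add_sq_real, real_inner_smul_right, hpv, norm_smul, hv, Real.norm_eq_abs, mul_one,
    sq_abs]
  ring

/-- In the balancing game with an odd number `k` of unit vectors per round, in
an inner product space of dimension at least 2, Player I has a strategy:
choosing all `k` vectors of round `i` equal to a unit vector orthogonal to the
current position forces `‖p i‖² ≥ i` for all `i`. -/
theorem balancing_game_player_one {X : Type*} [NormedAddCommGroup X] [InnerProductSpace ℝ X]
    (hdim : 2 ≤ Module.rank ℝ X) (k : ℕ) (hk : Odd k) :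
    ∃ τ : X → X, (∀ w, ‖τ w‖ = 1 ∧ inner ℝ w (τ w) = (0 : ℝ)) ∧
      ∀ ε : ℕ → Fin k → ℝ, (∀ i j, ε i j = 1 ∨ ε i j = -1) →
        ∀ p : ℕ → X, p 0 = 0 →
          (∀ i, p (i + 1) = p i + ∑ j, ε i j • τ (p i)) →
          ∀ i : ℕ, (i : ℝ) ≤ ‖p i‖ ^ 2 := by
  choose τ hτ using exists_norm_eq_one_inner_eq_zero hdim
  refine ⟨τ, hτ, fun ε hε p hp0 hp i => ?_⟩
  induction i with
  | zero => simp [hp0]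
  | succ i ih =>
    have hround : 1 ≤ (∑ j, ε i j) ^ 2 :=
      one_le_sq_sum_signs (by simpa using hk) (ε i) fun j _ => hε i j
    rw [hp i, ← sum_smul, norm_add_smul_sq_of_inner_eq_zero (hτ _).1 (hτ _).2]
    push_cast
    linarith
end

section
/- Let a, b be linearly independent vectors of norm 1 in a normed plane and let w = λa + μb with λ, μ ≥ 0 and ‖w‖ ≤ 2. Then |λ − μ| ≤ 2, and ‖(λ−1)a + (μ−1)b‖ ≤ 2. -/
/-!
The first bound is the reverse triangle inequality `|‖λa‖ - ‖μb‖| ≤ ‖λa + μb‖`. For the second,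
by symmetry `μ ≤ λ`. If `μ ≤ 1`, the triangle inequality gives `|λ - 1| + (1 - μ) ≤ 2`. If `μ > 1`,
then `(λ-1)a + (μ-1)b = (1 - 1/μ) w + (1/μ) (λ-μ)a` is a convex combination of two points of the
closed ball of radius `2`.
-/

section

variable {E : Type*} [SeminormedAddCommGroup E] [NormedSpace ℝ E] {a b : E} {lam mu : ℝ}

lemma abs_sub_le_norm_smul_add_smul (ha : ‖a‖ = 1) (hb : ‖b‖ = 1) (hlam : 0 ≤ lam)
    (hmu : 0 ≤ mu) : |lam - mu| ≤ ‖lam • a + mu • b‖ := by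
  simpa [norm_smul, ha, hb, abs_of_nonneg hlam, abs_of_nonneg hmu] using
    abs_norm_sub_norm_le (lam • a) (-(mu • b))

lemma norm_sub_one_smul_add_sub_one_smul_le_of_le (ha : ‖a‖ = 1) (hb : ‖b‖ = 1) (hmu : 0 ≤ mu)
    (hle : mu ≤ lam) (hw : ‖lam • a + mu • b‖ ≤ 2) :
    ‖(lam - 1) • a + (mu - 1) • b‖ ≤ 2 := by
  have hdiff : lam - mu ≤ 2 :=
    (le_abs_self _).trans ((abs_sub_le_norm_smul_add_smul ha hb (hmu.trans hle) hmu).trans hw)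
  rcases le_or_gt mu 1 with hmu1 | hmu1
  · have hlam1 : |lam - 1| ≤ 1 + mu := abs_sub_le_iff.2 ⟨by linarith, by linarith⟩
    calc ‖(lam - 1) • a + (mu - 1) • b‖ ≤ ‖(lam - 1) • a‖ + ‖(mu - 1) • b‖ := norm_add_le _ _
      _ = |lam - 1| + |mu - 1| := by
        rw [norm_smul, norm_smul, ha, hb, Real.norm_eq_abs, Real.norm_eq_abs, mul_one, mul_one]
      _ ≤ 2 := by rw [abs_of_nonpos (sub_nonpos.2 hmu1)]; linarith
  · have hmu0 : 0 < mu := zero_lt_one.trans hmu1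
    have hcomb : (lam - 1) • a + (mu - 1) • b
        = (1 - mu⁻¹) • (lam • a + mu • b) + mu⁻¹ • ((lam - mu) • a) := by
      match_scalars <;> field_simp; ring
    have hdiff_mem : (lam - mu) • a ∈ Metric.closedBall (0 : E) 2 := by
      rw [mem_closedBall_zero_iff, norm_smul, ha, Real.norm_eq_abs, mul_one,
        abs_of_nonneg (sub_nonneg.2 hle)]
      exact hdiff
    have hmem := convex_closedBall (0 : E) 2 (mem_closedBall_zero_iff.2 hw) hdiff_mem
      (sub_nonneg.2 (inv_le_one_of_one_le₀ hmu1.le)) (inv_nonneg.2 hmu0.le) (sub_add_cancel 1 _)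
    rw [hcomb]
    exact mem_closedBall_zero_iff.1 hmem

end

theorem online_step_key_estimate_general {E : Type*} [NormedAddCommGroup E] [NormedSpace ℝ E]
    (a b : E) (ha : ‖a‖ = 1) (hb : ‖b‖ = 1)
    (lam mu : ℝ) (hlam : 0 ≤ lam) (hmu : 0 ≤ mu)
    (hw : ‖lam • a + mu • b‖ ≤ 2) :
    |lam - mu| ≤ 2 ∧ ‖(lam - 1) • a + (mu - 1) • b‖ ≤ 2 := by
  refine ⟨(abs_sub_le_norm_smul_add_smul ha hb hlam hmu).trans hw, ?_⟩
  rcases le_total mu lam with hle | hle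
  · exact norm_sub_one_smul_add_sub_one_smul_le_of_le ha hb hmu hle hw
  · rw [add_comm] at hw ⊢
    exact norm_sub_one_smul_add_sub_one_smul_le_of_le hb ha hlam hle hw

/-- If `a, b` are linearly independent unit vectors in a normed plane and
`w = λ a + μ b` with `λ, μ ≥ 0` and `‖w‖ ≤ 2`, then `|λ - μ| ≤ 2` and
`‖(λ-1) a + (μ-1) b‖ ≤ 2`. -/
theorem online_step_key_estimate {E : Type*} [NormedAddCommGroup E] [NormedSpace ℝ E]
    (hdim : Module.finrank ℝ E = 2) (a b : E) (ha : ‖a‖ = 1) (hb : ‖b‖ = 1)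
    (hli : LinearIndependent ℝ ![a, b]) (lam mu : ℝ) (hlam : 0 ≤ lam) (hmu : 0 ≤ mu)
    (hw : ‖lam • a + mu • b‖ ≤ 2) :
    |lam - mu| ≤ 2 ∧ ‖(lam - 1) • a + (mu - 1) • b‖ ≤ 2 :=
  online_step_key_estimate_general a b ha hb lam mu hlam hmu hw
end

section
/- Let x₁, x₂, x₃, x₄ be the vertices of a regular simplex in Euclidean 3-space. Then there exists a point x₅ in the interior of the simplex such that x₅ is not a Fermat-Toricelli point of {x₁, x₂, x₃, x₄, x₅}, i.e. x₅ does not minimize x ↦ ∑_{i=1}^5 ‖x − x_i‖. -/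
/-!
In barycentric coordinates a regular simplex of side `d` is an isometric copy of the standard
simplex scaled by `d / √2`: `dist (∑ wᵢ xᵢ) (∑ w'ᵢ xᵢ) ^ 2 = d ^ 2 / 2 * ∑ (wᵢ - w'ᵢ) ^ 2`.
In particular the vertices are affinely independent, so they form an affine basis of `ℝ³`.

Take `y` close to the vertex `x₀` and `z` further along the axis from `x₀` to the centroid.
Passing from `y` to `z` increases the two terms `‖· - x₀‖` and `‖· - y‖` by at most `‖z - y‖`
each, but the axis makes an angle of cosine `√(2/3)` with each of the three edges at `x₀`,
so the three remaining terms decrease at a total rate close to `3√(2/3) > 2`.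
-/

open Finset RealInnerProductSpace

theorem AffineBasis.affineCombination_mem_interior_convexHull {ι E : Type*} [Fintype ι]
    [NormedAddCommGroup E] [NormedSpace ℝ E] (b : AffineBasis ι ℝ E) {w : ι → ℝ}
    (hw : ∑ i, w i = 1) (hpos : ∀ i, 0 < w i) :
    Finset.univ.affineCombination ℝ b w ∈ interior (convexHull ℝ (Set.range b)) := by
  rw [b.interior_convexHull]
  intro i
  rw [b.coord_apply_combination_of_mem (Finset.mem_univ i) hw]
  exact hpos i

namespace EuclideanGeometry

variable {V P : Type*} [NormedAddCommGroup V] [InnerProductSpace ℝ V] [MetricSpace P]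
  [NormedAddTorsor V P] {d : ℝ}

section

variable {ι : Type*} {p : ι → P}

theorem inner_weightedVSub_self_of_pairwise_dist_eq (h : Pairwise fun i j => dist (p i) (p j) = d)
    {s : Finset ι} {w : ι → ℝ} (hw : ∑ i ∈ s, w i = 0) :
    ⟪s.weightedVSub p w, s.weightedVSub p w⟫ = d ^ 2 / 2 * ∑ i ∈ s, w i ^ 2 := by
  classical
  have hdist : ∀ i j, w i * w j * (dist (p i) (p j) * dist (p i) (p j)) =
      w i * w j * d ^ 2 - if i = j then w i ^ 2 * d ^ 2 else 0 := by
    intro i j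
    by_cases hij : i = j
    · simp only [hij, dist_self, if_true]; ring
    · simp only [h hij, hij, if_false]; ring
  rw [inner_weightedVSub p hw p hw]
  simp_rw [hdist, Finset.sum_sub_distrib, Finset.sum_ite_eq]
  simp only [← Finset.sum_mul, ← Finset.mul_sum, hw]
  rw [Finset.sum_congr rfl fun i hi => if_pos hi, ← Finset.sum_mul]
  ring

theorem dist_affineCombination_sq_of_pairwise_dist_eq
    (h : Pairwise fun i j => dist (p i) (p j) = d) {s : Finset ι} {w₁ w₂ : ι → ℝ}
    (h₁ : ∑ i ∈ s, w₁ i = 1) (h₂ : ∑ i ∈ s, w₂ i = 1) :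
    dist (s.affineCombination ℝ p w₁) (s.affineCombination ℝ p w₂) ^ 2 =
      d ^ 2 / 2 * ∑ i ∈ s, (w₁ i - w₂ i) ^ 2 := by
  have hw : ∑ i ∈ s, (w₁ - w₂) i = 0 := by simp [Finset.sum_sub_distrib, h₁, h₂]
  rw [dist_eq_norm_vsub V, ← real_inner_self_eq_norm_sq, s.affineCombination_vsub,
    inner_weightedVSub_self_of_pairwise_dist_eq h hw]
  rfl

theorem dist_affineCombination_point_sq_of_pairwise_dist_eq [DecidableEq ι]
    (h : Pairwise fun i j => dist (p i) (p j) = d) {s : Finset ι} {w : ι → ℝ}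
    (hw : ∑ i ∈ s, w i = 1) {k : ι} (hk : k ∈ s) :
    dist (s.affineCombination ℝ p w) (p k) ^ 2 =
      d ^ 2 / 2 * (∑ i ∈ s, w i ^ 2 - 2 * w k + 1) := by
  have hsingle : ∑ i ∈ s, (Pi.single k 1 : ι → ℝ) i = 1 := by simp [hk]
  rw [← s.affineCombination_piSingle ℝ p hk,
    dist_affineCombination_sq_of_pairwise_dist_eq h hw hsingle]
  simp [sub_sq, Finset.sum_add_distrib, Finset.sum_sub_distrib, Pi.single_apply, hk]

theorem affineIndependent_of_pairwise_dist_eq [Fintype ι]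
    (h : Pairwise fun i j => dist (p i) (p j) = d) (hd : d ≠ 0) : AffineIndependent ℝ p := by
  rw [affineIndependent_iff_of_fintype]
  intro w hw hzero
  have hsq : ∑ i, w i ^ 2 = 0 := by
    have := inner_weightedVSub_self_of_pairwise_dist_eq h hw
    rw [hzero, inner_zero_left] at this
    exact (mul_eq_zero.mp this.symm).resolve_left (by positivity)
  intro i
  exact pow_eq_zero_iff two_ne_zero |>.mp <|
    (Finset.sum_eq_zero_iff_of_nonneg fun j _ => sq_nonneg (w j)).mp hsq i (mem_univ i)

end

variable {x : Fin 4 → P}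

def axisWeights (t : ℝ) : Fin 4 → ℝ := ![1 - 3 * t, t, t, t]

/-- `x 0 +ᵥ t • ∑ i, (x i -ᵥ x 0)`, on the line from `x 0` through the centroid. -/
noncomputable def axisPoint (x : Fin 4 → P) (t : ℝ) : P := univ.affineCombination ℝ x (axisWeights t)

theorem sum_axisWeights (t : ℝ) : ∑ i, axisWeights t i = 1 := by
  simp only [axisWeights, Fin.sum_univ_four, Matrix.cons_val]; ring

theorem axisWeights_of_ne_zero (t : ℝ) {k : Fin 4} (hk : k ≠ 0) : axisWeights t k = t := by
  fin_cases k <;> simp_all [axisWeights]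

theorem dist_axisPoint_sq (h : Pairwise fun i j => dist (x i) (x j) = d) (t s : ℝ) :
    dist (axisPoint x t) (axisPoint x s) ^ 2 = 6 * (t - s) ^ 2 * d ^ 2 := by
  rw [axisPoint, axisPoint,
    dist_affineCombination_sq_of_pairwise_dist_eq h (sum_axisWeights t) (sum_axisWeights s)]
  simp only [axisWeights, Fin.sum_univ_four, Matrix.cons_val]; ring

theorem dist_axisPoint_vertex_sq (h : Pairwise fun i j => dist (x i) (x j) = d) (t : ℝ)
    {k : Fin 4} (hk : k ≠ 0) :
    dist (axisPoint x t) (x k) ^ 2 = (6 * t ^ 2 - 4 * t + 1) * d ^ 2 := by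
  rw [axisPoint,
    dist_affineCombination_point_sq_of_pairwise_dist_eq h (sum_axisWeights t) (mem_univ k),
    axisWeights_of_ne_zero t hk]
  simp only [axisWeights, Fin.sum_univ_four, Matrix.cons_val]; ring

theorem sum_dist_axisPoint_lt (h : Pairwise fun i j => dist (x i) (x j) = d) (hd : 0 < d) :
    ∑ i, dist (axisPoint x (1 / 6)) (x i) + dist (axisPoint x (1 / 6)) (axisPoint x (1 / 50)) <
      ∑ i, dist (axisPoint x (1 / 50)) (x i) := by
  set y := axisPoint x (1 / 50)
  set z := axisPoint x (1 / 6)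
  have hzy : dist z y < 0.36 * d := by
    refine lt_of_pow_lt_pow_left₀ 2 (by positivity) ?_
    rw [dist_axisPoint_sq h, mul_pow]
    gcongr
    norm_num
  have hzx : ∀ k ≠ 0, dist z (x k) < 0.71 * d := by
    intro k hk
    refine lt_of_pow_lt_pow_left₀ 2 (by positivity) ?_
    rw [dist_axisPoint_vertex_sq h _ hk, mul_pow]
    gcongr
    norm_num
  have hyx : ∀ k ≠ 0, 0.96 * d < dist y (x k) := by
    intro k hk
    refine lt_of_pow_lt_pow_left₀ 2 dist_nonneg ?_
    rw [dist_axisPoint_vertex_sq h _ hk, mul_pow]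
    gcongr
    norm_num
  rw [Fin.sum_univ_four, Fin.sum_univ_four]
  -- triangle inequality at `x 0`, then `2 * 0.36 + 3 * 0.71 < 3 * 0.96`
  linarith [dist_triangle z y (x 0), hzx 1 (by decide), hzx 2 (by decide), hzx 3 (by decide),
    hyx 1 (by decide), hyx 2 (by decide), hyx 3 (by decide)]

end EuclideanGeometry

open EuclideanGeometry in
/-- For a regular simplex in Euclidean 3-space with vertices `x 1, …, x 4`,
there is a point `x₅` in the interior of the simplex that is not a
Fermat–Toricelli point of `{x 1, …, x 4, x₅}`: some `z` has strictly smaller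
sum of distances. -/
theorem regular_simplex_interior_not_ft (x : Fin 4 → EuclideanSpace ℝ (Fin 3))
    (d : ℝ) (hd : 0 < d) (hreg : ∀ i j, i ≠ j → dist (x i) (x j) = d) :
    ∃ y ∈ interior (convexHull ℝ (Set.range x)),
      ∃ z : EuclideanSpace ℝ (Fin 3),
        ∑ i, ‖z - x i‖ + ‖z - y‖ < ∑ i, ‖y - x i‖ := by
  have hind := affineIndependent_of_pairwise_dist_eq hreg hd.ne'
  let b : AffineBasis (Fin 4) ℝ (EuclideanSpace ℝ (Fin 3)) :=
    ⟨x, hind, hind.affineSpan_eq_top_iff_card_eq_finrank_add_one.mpr (by simp)⟩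
  refine ⟨axisPoint x (1 / 50),
    b.affineCombination_mem_interior_convexHull (sum_axisWeights _) fun i => ?_,
    axisPoint x (1 / 6), ?_⟩
  · fin_cases i <;> norm_num [axisWeights]
  · simpa only [dist_eq_norm] using sum_dist_axisPoint_lt hreg hd
end
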